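/- arXiv:2508.01463 — 3 statements merged into one kernel-verified Lean document; each statement's English description precedes it below -/
import Mathlib

section
/- Let v_θ and v_θ̃ be tanh feedforward neural networks with the same architecture of depth L ≥ 2, width W, and input dimension n₀ ≤ W, whose parameter vectors satisfy |θ|_{l^∞} ≤ B_θ, |θ̃|_{l^∞} ≤ B_θ with B_θ ≥ 1. Then for every x ∈ [−1, 1]^{n₀}, |v_θ(x) − v_θ̃(x)| ≤ 2 L W^L B_θ^{L−1} |θ − θ̃|_{l^∞}. -/
/-- The hidden-layer outputs of a feedforward neural network with activation `tanh`:
`tanhHidden n A b x 0 = x` is the input, and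
`tanhHidden n A b x (l+1) = σ(Tˡ⁺¹(tanhHidden n A b x l))` with `σ = tanh` componentwise,
where `Tˡ⁺¹(y) = A l · y + b l` (`0`-based parameter indexing). -/
noncomputable def tanhHidden (n : ℕ → ℕ)
    (A : ∀ l : ℕ, Fin (n (l + 1)) → Fin (n l) → ℝ)
    (b : ∀ l : ℕ, Fin (n (l + 1)) → ℝ)
    (x : Fin (n 0) → ℝ) : ∀ l : ℕ, Fin (n l) → ℝ
  | 0 => x
  | l + 1 => fun i =>
      Real.tanh (∑ j, A l i j * tanhHidden n A b x l j + b l i)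

/-- The output of a depth-`L` feedforward `tanh` neural network with layer widths
`n 0, n 1, …, n L`: the affine map `T^L` (no activation) applied to the `(L-1)`-st
hidden layer. -/
noncomputable def tanhNet (L : ℕ) (n : ℕ → ℕ)
    (A : ∀ l : ℕ, Fin (n (l + 1)) → Fin (n l) → ℝ)
    (b : ∀ l : ℕ, Fin (n (l + 1)) → ℝ)
    (x : Fin (n 0) → ℝ) : Fin (n (L - 1 + 1)) → ℝ :=
  fun i => ∑ j, A (L - 1) i j * tanhHidden n A b x (L - 1) j + b (L - 1) i

open Real

lemma tanh_abs_le_one (x : ℝ) : |Real.tanh x| ≤ 1 := by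
  rw [Real.tanh_eq_sinh_div_cosh, abs_div, abs_of_pos (Real.cosh_pos x)]
  rw [div_le_one (Real.cosh_pos x)]
  calc |Real.sinh x| = Real.sinh |x| := Real.abs_sinh x
    _ ≤ Real.cosh |x| := (Real.sinh_lt_cosh _).le
    _ = Real.cosh x := Real.cosh_abs x

lemma tanh_hasDerivAt (x : ℝ) :
    HasDerivAt Real.tanh (1 / Real.cosh x ^ 2) x := by
  have h := (Real.hasDerivAt_sinh x).div (Real.hasDerivAt_cosh x) (Real.cosh_pos x).ne'
  have : (Real.cosh x * Real.cosh x - Real.sinh x * Real.sinh x) / Real.cosh x ^ 2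
      = 1 / Real.cosh x ^ 2 := by
    rw [show Real.cosh x * Real.cosh x - Real.sinh x * Real.sinh x
        = Real.cosh x ^ 2 - Real.sinh x ^ 2 by ring, Real.cosh_sq_sub_sinh_sq]
  rw [← this]
  have heq : Real.tanh = fun y => Real.sinh y / Real.cosh y := by
    funext y; exact Real.tanh_eq_sinh_div_cosh y
  rw [heq]
  exact h

lemma tanh_lip (a b : ℝ) : |Real.tanh a - Real.tanh b| ≤ |a - b| := by
  have h := Convex.norm_image_sub_le_of_norm_hasDerivWithin_le
    (f := Real.tanh) (f' := fun y => 1 / Real.cosh y ^ 2) (C := 1) (s := Set.univ)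
    (fun y _ => (tanh_hasDerivAt y).hasDerivWithinAt)
    (fun y _ => by
      rw [Real.norm_eq_abs, abs_of_pos (by positivity)]
      rw [div_le_one (by positivity)]
      nlinarith [Real.one_le_cosh y])
    convex_univ (Set.mem_univ b) (Set.mem_univ a)
  simpa [Real.norm_eq_abs, one_mul] using h

lemma affine_diff_bound {m : ℕ} (a a' u u' : Fin m → ℝ) (c c' : ℝ) (K D : ℝ)
    (hK : ∀ j, |a j| * |u j - u' j| ≤ K)
    (hu' : ∀ j, |u' j| ≤ 1)
    (hda : ∀ j, |a j - a' j| ≤ D)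
    (hdc : |c - c'| ≤ D) :
    |(∑ j, a j * u j + c) - (∑ j, a' j * u' j + c')| ≤ m * (K + D) + D := by
  have key : ∀ j, |a j * u j - a' j * u' j| ≤ K + D := by
    intro j
    calc |a j * u j - a' j * u' j|
        = |a j * (u j - u' j) + (a j - a' j) * u' j| := by ring_nf
      _ ≤ |a j * (u j - u' j)| + |(a j - a' j) * u' j| := abs_add_le _ _
      _ = |a j| * |u j - u' j| + |a j - a' j| * |u' j| := by rw [abs_mul, abs_mul]
      _ ≤ K + D := by
          have hD0 : 0 ≤ D := le_trans (abs_nonneg _) hdc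
          have h2 := mul_le_mul (hda j) (hu' j) (abs_nonneg _) hD0
          rw [mul_one] at h2
          linarith [hK j]
  calc |(∑ j, a j * u j + c) - (∑ j, a' j * u' j + c')|
      = |(∑ j, (a j * u j - a' j * u' j)) + (c - c')| := by
        rw [Finset.sum_sub_distrib]; ring_nf
    _ ≤ |∑ j, (a j * u j - a' j * u' j)| + |c - c'| := abs_add_le _ _
    _ ≤ (∑ j, |a j * u j - a' j * u' j|) + |c - c'| := by
        gcongr; exact Finset.abs_sum_le_sum_abs _ _
    _ ≤ (∑ _j : Fin m, (K + D)) + D :=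
        add_le_add (Finset.sum_le_sum fun j _ => key j) hdc
    _ = m * (K + D) + D := by
        rw [Finset.sum_const, Finset.card_univ, Fintype.card_fin, nsmul_eq_mul]

/-- Lipschitz dependence of a tanh network on its parameters: if two networks with
the same architecture (depth `L ≥ 2`, width `W`, input dimension `n 0 ≤ W`) have
parameters bounded by `Bθ ≥ 1` and differing entrywise by at most `d` (so that
`|θ - θ̃|_{l^∞} ≤ d`), then for every `x ∈ [-1,1]^{n 0}`,
`|v_θ(x) - v_θ̃(x)| ≤ 2 L W^L Bθ^(L-1) d`. -/
theorem tanhNet_param_lipschitz (L : ℕ) (hL : 2 ≤ L) (n : ℕ → ℕ) (hnL : n L = 1)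
    (W : ℕ) (hW : ∀ l : ℕ, 1 ≤ l → l ≤ L → n l ≤ W) (hW0 : n 0 ≤ W)
    (A A' : ∀ l : ℕ, Fin (n (l + 1)) → Fin (n l) → ℝ)
    (b b' : ∀ l : ℕ, Fin (n (l + 1)) → ℝ) (Bθ : ℝ) (hB1 : 1 ≤ Bθ)
    (hA : ∀ l : ℕ, l < L → ∀ i j, |A l i j| ≤ Bθ)
    (hb : ∀ l : ℕ, l < L → ∀ i, |b l i| ≤ Bθ)
    (hA' : ∀ l : ℕ, l < L → ∀ i j, |A' l i j| ≤ Bθ)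
    (hb' : ∀ l : ℕ, l < L → ∀ i, |b' l i| ≤ Bθ)
    (d : ℝ)
    (hdA : ∀ l : ℕ, l < L → ∀ i j, |A l i j - A' l i j| ≤ d)
    (hdb : ∀ l : ℕ, l < L → ∀ i, |b l i - b' l i| ≤ d) :
    ∀ x : Fin (n 0) → ℝ, (∀ k, x k ∈ Set.Icc (-1 : ℝ) 1) →
      ∀ i : Fin (n (L - 1 + 1)),
        |tanhNet L n A b x i - tanhNet L n A' b' x i| ≤
          2 * (L : ℝ) * (W : ℝ) ^ L * Bθ ^ (L - 1) * d := by
  intro x hx i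
  have hB0 : (0:ℝ) < Bθ := lt_of_lt_of_le one_pos hB1
  have hW1 : 1 ≤ W := hnL ▸ hW L (by omega) le_rfl
  have hWR : (1:ℝ) ≤ W := by exact_mod_cast hW1
  -- d ≥ 0: there exists an index in the output layer
  have hLpos : L - 1 < L := by omega
  have hd0 : 0 ≤ d := by
    have : (0:ℕ) < n (L - 1 + 1) := by rw [show L - 1 + 1 = L from by omega, hnL]; omega
    exact le_trans (abs_nonneg _) (hdb (L-1) hLpos ⟨0, this⟩)
  -- hidden outputs bounded by 1
  have hbnd : ∀ (A₀ : ∀ l : ℕ, Fin (n (l + 1)) → Fin (n l) → ℝ)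
      (b₀ : ∀ l : ℕ, Fin (n (l + 1)) → ℝ) (l : ℕ) (j : Fin (n l)),
      |tanhHidden n A₀ b₀ x l j| ≤ 1 := by
    intro A₀ b₀ l j
    cases l with
    | zero =>
      simp only [tanhHidden]
      rcases hx j with ⟨h1, h2⟩
      rw [abs_le]; exact ⟨h1, h2⟩
    | succ l => exact tanh_abs_le_one _
  -- key induction
  have key : ∀ l : ℕ, l ≤ L - 1 → ∀ j : Fin (n l),
      Bθ * |tanhHidden n A b x l j - tanhHidden n A' b' x l j| ≤
        2 * l * (W:ℝ) ^ l * Bθ ^ l * d := by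
    intro l
    induction l with
    | zero =>
      intro _ j
      simp [tanhHidden]
    | succ l ih =>
      intro hl j
      have hlL : l < L := by omega
      have hle : l ≤ L - 1 := by omega
      have hnl : (n l : ℝ) ≤ W := by
        exact_mod_cast (by cases l with
          | zero => exact hW0
          | succ m => exact hW (m+1) (by omega) (by omega))
      set C : ℝ := 2 * l * (W:ℝ) ^ l * Bθ ^ l * d with hC
      have hC0 : 0 ≤ C := by positivity
      have step : |tanhHidden n A b x (l+1) j - tanhHidden n A' b' x (l+1) j| ≤
          (n l : ℝ) * (C + d) + d := by
        simp only [tanhHidden]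
        refine le_trans (tanh_lip _ _) ?_
        exact affine_diff_bound (A l j) (A' l j)
          (tanhHidden n A b x l) (tanhHidden n A' b' x l) (b l j) (b' l j) C d
          (fun k => by
            calc |A l j k| * |tanhHidden n A b x l k - tanhHidden n A' b' x l k|
                ≤ Bθ * |tanhHidden n A b x l k - tanhHidden n A' b' x l k| := by
                  gcongr; exact hA l hlL j k
              _ ≤ C := ih hle k)
          (fun k => hbnd A' b' l k)
          (fun k => hdA l hlL j k)
          (hdb l hlL j)
      calc Bθ * |tanhHidden n A b x (l+1) j - tanhHidden n A' b' x (l+1) j|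
          ≤ Bθ * ((n l : ℝ) * (C + d) + d) := by gcongr
        _ ≤ Bθ * ((W:ℝ) * (C + d) + d) := by gcongr
        _ ≤ 2 * ((l:ℝ)+1) * (W:ℝ) ^ (l+1) * Bθ ^ (l+1) * d := by
            rw [hC]
            push_cast
            rw [pow_succ, pow_succ]
            have h1 : (1:ℝ) ≤ (W:ℝ)^l := one_le_pow₀ hWR
            have h2 : (1:ℝ) ≤ Bθ^l := one_le_pow₀ hB1
            have hab : (1:ℝ) ≤ (W:ℝ)^l * Bθ^l := by nlinarith
            have key1 : (W:ℝ)*Bθ*d ≤ (W:ℝ)^l*Bθ^l*((W:ℝ)*Bθ*d) :=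
              le_mul_of_one_le_left (by positivity) hab
            have key2 : Bθ*d ≤ (W:ℝ)^l*Bθ^l*((W:ℝ)*(Bθ*d)) := by
              calc Bθ*d ≤ (W:ℝ)*(Bθ*d) := le_mul_of_one_le_left (by positivity) hWR
                _ ≤ _ := le_mul_of_one_le_left (by positivity) hab
            nlinarith [key1, key2]
        _ = 2 * ((l+1 : ℕ):ℝ) * (W:ℝ) ^ (l+1) * Bθ ^ (l+1) * d := by push_cast; ring
  -- final layer
  have hle : L - 1 ≤ L - 1 := le_rfl
  have hnl : (n (L-1) : ℝ) ≤ W := by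
    exact_mod_cast hW (L-1) (by omega) (by omega)
  set C : ℝ := 2 * (L-1 : ℕ) * (W:ℝ) ^ (L-1) * Bθ ^ (L-1) * d with hC
  have hC0 : 0 ≤ C := by positivity
  have step : |tanhNet L n A b x i - tanhNet L n A' b' x i| ≤
      (n (L-1) : ℝ) * (C + d) + d := by
    simp only [tanhNet]
    exact affine_diff_bound (A (L-1) i) (A' (L-1) i)
      (tanhHidden n A b x (L-1)) (tanhHidden n A' b' x (L-1)) (b (L-1) i) (b' (L-1) i) C d
      (fun k => by
        calc |A (L-1) i k| * |tanhHidden n A b x (L-1) k - tanhHidden n A' b' x (L-1) k|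
            ≤ Bθ * |tanhHidden n A b x (L-1) k - tanhHidden n A' b' x (L-1) k| := by
              gcongr; exact hA (L-1) hLpos i k
          _ ≤ C := key (L-1) hle k)
      (fun k => hbnd A' b' (L-1) k)
      (fun k => hdA (L-1) hLpos i k)
      (hdb (L-1) hLpos i)
  have hWL : ((W:ℝ)) ^ L = (W:ℝ)^(L-1) * W := by
    rw [← pow_succ, show L - 1 + 1 = L from by omega]
  calc |tanhNet L n A b x i - tanhNet L n A' b' x i|
      ≤ (n (L-1) : ℝ) * (C + d) + d := step
    _ ≤ (W:ℝ) * (C + d) + d := by gcongr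
    _ ≤ 2 * (L : ℝ) * (W : ℝ) ^ L * Bθ ^ (L - 1) * d := by
        rw [hC, hWL]
        have hcast : ((L - 1 : ℕ) : ℝ) = (L:ℝ) - 1 := by
          push_cast [Nat.cast_sub (by omega : 1 ≤ L)]; ring
        rw [hcast]
        have h1 : (1:ℝ) ≤ (W:ℝ)^(L-1) := one_le_pow₀ hWR
        have h2 : (1:ℝ) ≤ Bθ^(L-1) := one_le_pow₀ hB1
        have hab : (1:ℝ) ≤ (W:ℝ)^(L-1) * Bθ^(L-1) := by nlinarith
        have key1 : (W:ℝ)*d ≤ (W:ℝ)^(L-1)*Bθ^(L-1)*((W:ℝ)*d) :=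
          le_mul_of_one_le_left (by positivity) hab
        have key2 : d ≤ (W:ℝ)^(L-1)*Bθ^(L-1)*((W:ℝ)*d) := by
          calc d ≤ (W:ℝ)*d := le_mul_of_one_le_left hd0 hWR
            _ ≤ _ := le_mul_of_one_le_left (by positivity) hab
        have hLc : (1:ℝ) ≤ (L:ℝ) := by exact_mod_cast (by omega : 1 ≤ L)
        nlinarith [key1, key2]
end

section
/- Let F be a countable family of measurable functions from a measurable space D to ℝ and let ψ : ℝ → ℝ be ℓ-Lipschitz with ψ(0) = 0. Then R_n(ψ ∘ F) ≤ 2ℓ R_n(F), where ψ ∘ F := { ψ ∘ f : f ∈ F }. (This is the contraction lemma used in the paper's statistical-error analysis; with the absolute-value form of the Rademacher complexity the correct constant is 2ℓ and the normalization ψ(0) = 0 is required.) -/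
open MeasureTheory ProbabilityTheory


lemma rad_step {ι : Type*} [Nonempty ι] (ψ : ℝ → ℝ) (ℓ : ℝ)
    (hψ : ∀ a b : ℝ, |ψ a - ψ b| ≤ ℓ * |a - b|) (hψ0 : ψ 0 = 0)
    (a τ : ι → ℝ) :
    (⨆ i, ENNReal.ofReal (a i + ψ (τ i))) + (⨆ i, ENNReal.ofReal (a i - ψ (τ i)))
      ≤ (⨆ i, ENNReal.ofReal (a i + ℓ * τ i)) + (⨆ i, ENNReal.ofReal (a i - ℓ * τ i)) := by
  set P := ⨆ i, ENNReal.ofReal (a i + ℓ * τ i) with hP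
  set Q := ⨆ i, ENNReal.ofReal (a i - ℓ * τ i) with hQ
  have hP' : ∀ i, ENNReal.ofReal (a i + ℓ * τ i) ≤ P := fun i => le_iSup (fun i => ENNReal.ofReal (a i + ℓ * τ i)) i
  have hQ' : ∀ i, ENNReal.ofReal (a i - ℓ * τ i) ≤ Q := fun i => le_iSup (fun i => ENNReal.ofReal (a i - ℓ * τ i)) i
  have habs : ∀ x : ℝ, |ψ x| ≤ ℓ * |x| := by
    intro x
    have := hψ x 0
    simpa [hψ0] using this
  -- single-term bounds
  have hu : ∀ i, ENNReal.ofReal (a i + ψ (τ i)) ≤ P + Q := by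
    intro i
    rcases le_or_gt 0 (τ i) with h | h
    · refine le_trans (le_trans ?_ (hP' i)) le_self_add
      apply ENNReal.ofReal_le_ofReal
      have := (abs_le.mp (habs (τ i))).2
      rw [abs_of_nonneg h] at this; linarith
    · refine le_trans (le_trans ?_ (hQ' i)) le_add_self
      apply ENNReal.ofReal_le_ofReal
      have := (abs_le.mp (habs (τ i))).2
      rw [abs_of_neg h] at this; linarith
  have hv : ∀ k, ENNReal.ofReal (a k - ψ (τ k)) ≤ P + Q := by
    intro k
    rcases le_or_gt 0 (τ k) with h | h
    · refine le_trans (le_trans ?_ (hP' k)) le_self_add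
      apply ENNReal.ofReal_le_ofReal
      have := (abs_le.mp (habs (τ k))).1
      rw [abs_of_nonneg h] at this; linarith
    · refine le_trans (le_trans ?_ (hQ' k)) le_add_self
      apply ENNReal.ofReal_le_ofReal
      have := (abs_le.mp (habs (τ k))).1
      rw [abs_of_neg h] at this; linarith
  refine ENNReal.iSup_add_iSup_le fun i k => ?_
  rcases le_or_gt (a i + ψ (τ i)) 0 with h1 | h1
  · rw [ENNReal.ofReal_eq_zero.mpr h1, zero_add]; exact hv k
  rcases le_or_gt (a k - ψ (τ k)) 0 with h2 | h2
  · rw [ENNReal.ofReal_eq_zero.mpr h2, add_zero]; exact hu i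
  rw [← ENNReal.ofReal_add h1.le h2.le]
  have hlip := abs_le.mp (hψ (τ i) (τ k))
  rcases le_total (τ k) (τ i) with h | h
  · have : (a i + ψ (τ i)) + (a k - ψ (τ k)) ≤ (a i + ℓ * τ i) + (a k - ℓ * τ k) := by
      have := hlip.2
      rw [abs_of_nonneg (by linarith : (0:ℝ) ≤ τ i - τ k)] at this
      linarith
    exact le_trans (ENNReal.ofReal_le_ofReal this)
      (le_trans ENNReal.ofReal_add_le (add_le_add (hP' i) (hQ' k)))
  · have : (a i + ψ (τ i)) + (a k - ψ (τ k)) ≤ (a k + ℓ * τ k) + (a i - ℓ * τ i) := by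
      have := hlip.2
      rw [abs_of_nonpos (by linarith : τ i - τ k ≤ 0)] at this
      linarith
    exact le_trans (ENNReal.ofReal_le_ofReal this)
      (le_trans ENNReal.ofReal_add_le (add_le_add (hP' k) (hQ' i)))


lemma rad_coord {ι : Type*} [Nonempty ι] {n : ℕ} (ψ : ℝ → ℝ) (ℓ : ℝ)
    (hψ : ∀ a b : ℝ, |ψ a - ψ b| ≤ ℓ * |a - b|) (hψ0 : ψ 0 = 0)
    (j₀ : Fin n) (g h : ι → Fin n → ℝ) (τ : ι → ℝ)
    (hgj : ∀ i, g i j₀ = ψ (τ i)) (hhj : ∀ i, h i j₀ = ℓ * τ i)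
    (hgh : ∀ i j, j ≠ j₀ → g i j = h i j)
    (rad_step : ∀ (a τ' : ι → ℝ),
      (⨆ i, ENNReal.ofReal (a i + ψ (τ' i))) + (⨆ i, ENNReal.ofReal (a i - ψ (τ' i)))
        ≤ (⨆ i, ENNReal.ofReal (a i + ℓ * τ' i)) + (⨆ i, ENNReal.ofReal (a i - ℓ * τ' i))) :
    ∑ s : Fin n → Bool, ⨆ i, ENNReal.ofReal (∑ j, (if s j then (1:ℝ) else -1) * g i j)
      ≤ ∑ s : Fin n → Bool, ⨆ i, ENNReal.ofReal (∑ j, (if s j then (1:ℝ) else -1) * h i j) := by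
  classical
  set e := Equiv.funSplitAt j₀ Bool with he
  have restruct : ∀ (u : ι → Fin n → ℝ),
      (∑ s : Fin n → Bool, ⨆ i, ENNReal.ofReal (∑ j, (if s j then (1:ℝ) else -1) * u i j))
        = ∑ r : {j : Fin n // j ≠ j₀} → Bool,
            ((⨆ i, ENNReal.ofReal (∑ j, (if e.symm (true, r) j then (1:ℝ) else -1) * u i j))
              + ⨆ i, ENNReal.ofReal (∑ j, (if e.symm (false, r) j then (1:ℝ) else -1) * u i j)) := by
    intro u
    rw [← Equiv.sum_comp e.symm
      (fun s => ⨆ i, ENNReal.ofReal (∑ j, (if s j then (1:ℝ) else -1) * u i j)),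
      Fintype.sum_prod_type, Fintype.sum_bool]
    rw [← Finset.sum_add_distrib]
  rw [restruct g, restruct h]
  apply Finset.sum_le_sum
  intro r _
  have hst : e.symm (true, r) j₀ = true := by
    simp [he, Equiv.funSplitAt_symm_apply]
  have hsf : e.symm (false, r) j₀ = false := by
    simp [he, Equiv.funSplitAt_symm_apply]
  have hagree : ∀ j, j ≠ j₀ → e.symm (true, r) j = e.symm (false, r) j := by
    intro j hj
    simp [he, Equiv.funSplitAt_symm_apply, hj]
  set a : ι → ℝ := fun i =>
    ∑ j ∈ Finset.univ.erase j₀, (if e.symm (true, r) j then (1:ℝ) else -1) * g i j with ha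
  have h1 : ∀ i, (∑ j, (if e.symm (true, r) j then (1:ℝ) else -1) * g i j) = a i + ψ (τ i) := by
    intro i
    rw [← Finset.add_sum_erase _ _ (Finset.mem_univ j₀), hst, if_pos rfl, one_mul, hgj i,
      add_comm]
  have h2 : ∀ i, (∑ j, (if e.symm (false, r) j then (1:ℝ) else -1) * g i j) = a i - ψ (τ i) := by
    intro i
    have hs : (∑ j ∈ Finset.univ.erase j₀,
        (if e.symm (false, r) j then (1:ℝ) else -1) * g i j) = a i :=
      Finset.sum_congr rfl fun j hj => by rw [hagree j (Finset.mem_erase.mp hj).1]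
    rw [← Finset.add_sum_erase _ _ (Finset.mem_univ j₀), hsf, if_neg (by simp), hgj i, hs]
    ring
  have hah : ∀ i, (∑ j ∈ Finset.univ.erase j₀,
      (if e.symm (true, r) j then (1:ℝ) else -1) * h i j) = a i := by
    intro i
    exact Finset.sum_congr rfl (fun j hj => by
      rw [hgh i j (Finset.mem_erase.mp hj).1])
  have h3 : ∀ i, (∑ j, (if e.symm (true, r) j then (1:ℝ) else -1) * h i j) = a i + ℓ * τ i := by
    intro i
    rw [← Finset.add_sum_erase _ _ (Finset.mem_univ j₀), hst, if_pos rfl, one_mul, hhj i,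
      hah i, add_comm]
  have h4 : ∀ i, (∑ j, (if e.symm (false, r) j then (1:ℝ) else -1) * h i j) = a i - ℓ * τ i := by
    intro i
    have hs : (∑ j ∈ Finset.univ.erase j₀,
        (if e.symm (false, r) j then (1:ℝ) else -1) * h i j) = a i :=
      Finset.sum_congr rfl fun j hj => by
        rw [hagree j (Finset.mem_erase.mp hj).1, ← hgh i j (Finset.mem_erase.mp hj).1]
    rw [← Finset.add_sum_erase _ _ (Finset.mem_univ j₀), hsf, if_neg (by simp), hhj i, hs]
    ring
  simp only [h1, h2, h3, h4]
  exact rad_step a τ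


lemma rademacher_map_eq {Ω' : Type*} [MeasureSpace Ω'] [IsProbabilityMeasure (ℙ : Measure Ω')]
    {n : ℕ} (ε : Fin n → Ω' → ℝ) (hεmeas : ∀ j, Measurable (ε j))
    (hεindep : iIndepFun ε ℙ)
    (hεdist : ∀ j, Measure.map (ε j) ℙ =
      (1 / 2 : ENNReal) • Measure.dirac (1 : ℝ) +
        (1 / 2 : ENNReal) • Measure.dirac (-1 : ℝ)) :
    Measure.map (fun ω' (j : Fin n) => ε j ω') ℙ =
      ∑ s : Fin n → Bool,
        ((2 : ENNReal)⁻¹) ^ n • Measure.dirac (fun j => if s j then (1:ℝ) else -1) := by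
  classical
  set ν : Measure ℝ := (1 / 2 : ENNReal) • Measure.dirac (1 : ℝ) +
      (1 / 2 : ENNReal) • Measure.dirac (-1 : ℝ) with hν
  have hνprob : IsProbabilityMeasure ν := by
    constructor
    simp [hν, Measure.dirac_apply]
    rw [ENNReal.inv_two_add_inv_two]
  have hνapply : ∀ (A : Set ℝ), MeasurableSet A →
      ν A = 2⁻¹ * (if (1:ℝ) ∈ A then 1 else 0) + 2⁻¹ * (if (-1:ℝ) ∈ A then 1 else 0) := by
    intro A hA
    simp [hν, Measure.dirac_apply' _ hA, Set.indicator_apply, one_div]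
  have hmeas : Measurable (fun ω' (j : Fin n) => ε j ω') :=
    measurable_pi_lambda _ hεmeas
  have h1 : Measure.pi (fun _ : Fin n => ν) = Measure.map (fun ω' (j : Fin n) => ε j ω') ℙ := by
    refine Measure.pi_eq fun A hA => ?_
    rw [Measure.map_apply hmeas (MeasurableSet.univ_pi hA)]
    have hpre : (fun ω' (j : Fin n) => ε j ω') ⁻¹' (Set.pi Set.univ A)
        = ⋂ j ∈ (Finset.univ : Finset (Fin n)), ε j ⁻¹' A j := by
      ext ω'; simp [Set.mem_pi]
    rw [hpre, hεindep.measure_inter_preimage_eq_mul Finset.univ (fun j _ => hA j)]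
    refine Finset.prod_congr rfl fun j _ => ?_
    rw [← Measure.map_apply (hεmeas j) (hA j), hεdist j]
  have h2 : Measure.pi (fun _ : Fin n => ν) =
      ∑ s : Fin n → Bool,
        ((2 : ENNReal)⁻¹) ^ n • Measure.dirac (fun j => if s j then (1:ℝ) else -1) := by
    refine Measure.pi_eq fun A hA => ?_
    rw [Measure.finset_sum_apply]
    have hd : ∀ s : Fin n → Bool,
        (((2 : ENNReal)⁻¹) ^ n • Measure.dirac (fun j => if s j then (1:ℝ) else -1))
            (Set.pi Set.univ A)
          = ((2 : ENNReal)⁻¹) ^ n * ∏ j, (if (if s j then (1:ℝ) else -1) ∈ A j then 1 else 0) := by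
      intro s
      rw [Measure.smul_apply, smul_eq_mul,
        Measure.dirac_apply' _ (MeasurableSet.univ_pi hA)]
      congr 1
      by_cases h : (fun j => if s j then (1:ℝ) else -1) ∈ Set.pi Set.univ A
      · rw [Set.indicator_of_mem h]
        rw [Set.mem_univ_pi] at h
        rw [Finset.prod_eq_one fun j _ => by rw [if_pos (h j)]]
        rfl
      · rw [Set.indicator_of_notMem h]
        rw [Set.mem_univ_pi] at h
        push_neg at h
        obtain ⟨j, hj⟩ := h
        rw [Finset.prod_eq_zero (Finset.mem_univ j) (by rw [if_neg hj])]
    simp_rw [hd]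
    calc
      (∑ s : Fin n → Bool, ((2:ENNReal)⁻¹) ^ n *
            ∏ j, (if (if s j then (1:ℝ) else -1) ∈ A j then (1:ENNReal) else 0))
          = ∑ s : Fin n → Bool,
              ∏ j, ((2:ENNReal)⁻¹ * if (if s j then (1:ℝ) else -1) ∈ A j then 1 else 0) := by
            refine Finset.sum_congr rfl fun s _ => ?_
            rw [Finset.prod_mul_distrib, Finset.prod_const, Finset.card_univ, Fintype.card_fin]
      _ = ∏ j, ∑ b ∈ (Finset.univ : Finset Bool),
              ((2:ENNReal)⁻¹ * if (if b then (1:ℝ) else -1) ∈ A j then 1 else 0) := by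
            rw [← Finset.sum_prod_piFinset, Fintype.piFinset_univ]
      _ = ∏ j, ν (A j) := by
            refine Finset.prod_congr rfl fun j _ => ?_
            rw [Fintype.sum_bool, hνapply (A j) (hA j)]
            simp
  rw [← h1, h2]


lemma rad_talagrand {ι : Type*} [Nonempty ι] {n : ℕ} (ψ : ℝ → ℝ) (ℓ : ℝ)
    (hψ : ∀ a b : ℝ, |ψ a - ψ b| ≤ ℓ * |a - b|) (hψ0 : ψ 0 = 0) (t : ι → Fin n → ℝ) :
    ∑ s : Fin n → Bool, ⨆ i, ENNReal.ofReal (∑ j, (if s j then (1:ℝ) else -1) * ψ (t i j))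
      ≤ ∑ s : Fin n → Bool, ⨆ i, ENNReal.ofReal (∑ j, (if s j then (1:ℝ) else -1) * (ℓ * t i j)) := by
  classical
  have main : ∀ A : Finset (Fin n),
      (∑ s : Fin n → Bool, ⨆ i, ENNReal.ofReal (∑ j, (if s j then (1:ℝ) else -1) * ψ (t i j)))
        ≤ ∑ s : Fin n → Bool, ⨆ i, ENNReal.ofReal
            (∑ j, (if s j then (1:ℝ) else -1) * (if j ∈ A then ℓ * t i j else ψ (t i j))) := by
    intro A
    induction A using Finset.induction_on with
    | empty => simp
    | insert j₀ A hj₀ ih =>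
      refine le_trans ih ?_
      refine rad_coord ψ ℓ hψ hψ0 j₀ _ _ (fun i => t i j₀) (fun i => by simp [hj₀])
        (fun i => by simp) (fun i j hj => by simp [Finset.mem_insert, hj]) ?_
      exact fun a τ' => rad_step ψ ℓ hψ hψ0 a τ'
  simpa using main Finset.univ

lemma rad_comb {ι : Type*} [Nonempty ι] {n : ℕ} (ψ : ℝ → ℝ) (ℓ : ℝ) (hℓ : 0 ≤ ℓ)
    (hψ : ∀ a b : ℝ, |ψ a - ψ b| ≤ ℓ * |a - b|) (hψ0 : ψ 0 = 0) (t : ι → Fin n → ℝ) :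
    ∑ s : Fin n → Bool, ⨆ i, ENNReal.ofReal |∑ j, (if s j then (1:ℝ) else -1) * ψ (t i j)|
      ≤ ENNReal.ofReal (2 * ℓ) *
        ∑ s : Fin n → Bool, ⨆ i, ENNReal.ofReal |∑ j, (if s j then (1:ℝ) else -1) * t i j| := by
  classical
  -- abs splitting, valid for any u
  have habs : ∀ u : ι → Fin n → ℝ,
      (∑ s : Fin n → Bool, ⨆ i, ENNReal.ofReal |∑ j, (if s j then (1:ℝ) else -1) * u i j|)
        ≤ 2 * ∑ s : Fin n → Bool, ⨆ i, ENNReal.ofReal (∑ j, (if s j then (1:ℝ) else -1) * u i j) := by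
    intro u
    have pt : ∀ (s : Fin n → Bool),
        (⨆ i, ENNReal.ofReal |∑ j, (if s j then (1:ℝ) else -1) * u i j|)
          ≤ (⨆ i, ENNReal.ofReal (∑ j, (if s j then (1:ℝ) else -1) * u i j))
            + ⨆ i, ENNReal.ofReal (-∑ j, (if s j then (1:ℝ) else -1) * u i j) := by
      intro s
      refine iSup_le fun i => ?_
      rcases abs_cases (∑ j, (if s j then (1:ℝ) else -1) * u i j) with ⟨h, _⟩ | ⟨h, _⟩
      · rw [h]
        exact le_trans (le_iSup (fun i => ENNReal.ofReal
          (∑ j, (if s j then (1:ℝ) else -1) * u i j)) i) le_self_add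
      · rw [h]
        exact le_trans (le_iSup (fun i => ENNReal.ofReal
          (-∑ j, (if s j then (1:ℝ) else -1) * u i j)) i) le_add_self
    refine le_trans (Finset.sum_le_sum fun s _ => pt s) ?_
    rw [Finset.sum_add_distrib]
    have hneg : (∑ s : Fin n → Bool, ⨆ i, ENNReal.ofReal
          (-∑ j, (if s j then (1:ℝ) else -1) * u i j))
        = ∑ s : Fin n → Bool, ⨆ i, ENNReal.ofReal (∑ j, (if s j then (1:ℝ) else -1) * u i j) := by
      have inv : Function.Involutive (fun s : Fin n → Bool => fun j => !(s j)) := by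
        intro s; funext j; simp
      refine Fintype.sum_equiv inv.toPerm _ _ fun s => ?_
      congr 1
      ext i
      congr 1
      rw [← Finset.sum_neg_distrib]
      refine Finset.sum_congr rfl fun j _ => ?_
      cases hb : s j <;> simp [inv, Function.Involutive.toPerm, hb] <;> ring
    rw [hneg, two_mul]
  refine le_trans (habs _) ?_
  have h2 : ENNReal.ofReal (2 * ℓ) = 2 * ENNReal.ofReal ℓ := by
    rw [ENNReal.ofReal_mul (by norm_num : (0:ℝ) ≤ 2)]
    norm_num
  rw [h2, mul_assoc]
  refine mul_le_mul_right ?_ 2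
  refine le_trans (rad_talagrand ψ ℓ hψ hψ0 t) ?_
  rw [Finset.mul_sum]
  refine Finset.sum_le_sum fun s _ => ?_
  rw [ENNReal.mul_iSup]
  refine iSup_mono fun i => ?_
  have : (∑ j, (if s j then (1:ℝ) else -1) * (ℓ * t i j))
      = ℓ * ∑ j, (if s j then (1:ℝ) else -1) * t i j := by
    rw [Finset.mul_sum]; exact Finset.sum_congr rfl fun j _ => by ring
  rw [this, ENNReal.ofReal_mul hℓ]
  exact mul_le_mul_right (ENNReal.ofReal_le_ofReal (le_abs_self _)) _


lemma rad_comb_c {ι : Type*} [Nonempty ι] {n : ℕ} (c : ℝ) (hc : 0 ≤ c)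
    (ψ : ℝ → ℝ) (ℓ : ℝ) (hℓ : 0 ≤ ℓ)
    (hψ : ∀ a b : ℝ, |ψ a - ψ b| ≤ ℓ * |a - b|) (hψ0 : ψ 0 = 0) (t : ι → Fin n → ℝ) :
    ∑ s : Fin n → Bool, ⨆ i, ENNReal.ofReal (c * |∑ j, (if s j then (1:ℝ) else -1) * ψ (t i j)|)
      ≤ ENNReal.ofReal (2 * ℓ) *
        ∑ s : Fin n → Bool, ⨆ i,
          ENNReal.ofReal (c * |∑ j, (if s j then (1:ℝ) else -1) * t i j|) := by
  have hsplit : ∀ (u : ι → Fin n → ℝ) (s : Fin n → Bool),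
      (⨆ i, ENNReal.ofReal (c * |∑ j, (if s j then (1:ℝ) else -1) * u i j|))
        = ENNReal.ofReal c * ⨆ i, ENNReal.ofReal |∑ j, (if s j then (1:ℝ) else -1) * u i j| := by
    intro u s
    rw [ENNReal.mul_iSup]
    exact iSup_congr fun i => ENNReal.ofReal_mul hc
  calc (∑ s : Fin n → Bool, ⨆ i,
        ENNReal.ofReal (c * |∑ j, (if s j then (1:ℝ) else -1) * ψ (t i j)|))
      = ENNReal.ofReal c * ∑ s : Fin n → Bool, ⨆ i,
          ENNReal.ofReal |∑ j, (if s j then (1:ℝ) else -1) * ψ (t i j)| := by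
        rw [Finset.mul_sum]; exact Finset.sum_congr rfl fun s _ => hsplit _ s
    _ ≤ ENNReal.ofReal c * (ENNReal.ofReal (2 * ℓ) * ∑ s : Fin n → Bool, ⨆ i,
          ENNReal.ofReal |∑ j, (if s j then (1:ℝ) else -1) * t i j|) :=
        mul_le_mul_right (rad_comb ψ ℓ hℓ hψ hψ0 t) _
    _ = ENNReal.ofReal (2 * ℓ) * (ENNReal.ofReal c * ∑ s : Fin n → Bool, ⨆ i,
          ENNReal.ofReal |∑ j, (if s j then (1:ℝ) else -1) * t i j|) := by ring
    _ = ENNReal.ofReal (2 * ℓ) * ∑ s : Fin n → Bool, ⨆ i,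
          ENNReal.ofReal (c * |∑ j, (if s j then (1:ℝ) else -1) * t i j|) := by
        congr 1
        rw [Finset.mul_sum]
        exact (Finset.sum_congr rfl fun s _ => (hsplit _ s).symm)

/-- Contraction lemma for Rademacher complexity (absolute-value form): if
`ψ : ℝ → ℝ` is `ℓ`-Lipschitz with `ψ 0 = 0`, then the Rademacher complexity of the
composed family `ψ ∘ F` is at most `2 ℓ` times that of `F`. Here the Rademacher
complexity `R_n(G) = E[sup_{g ∈ G} n⁻¹ |∑_j ε_j g(X_j)|]` is computed with i.i.d.
samples `X_1, …, X_n` and i.i.d. Rademacher signs `ε_1, …, ε_n` independent of the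
samples (modeled on a product probability space); the expectation of the supremum is
taken in `ℝ≥0∞` so that the inequality also covers families with infinite Rademacher
complexity. -/
theorem rademacher_contraction
    {D : Type*} [MeasurableSpace D]
    {Ω : Type*} [MeasureSpace Ω] [IsProbabilityMeasure (ℙ : Measure Ω)]
    {Ω' : Type*} [MeasureSpace Ω'] [IsProbabilityMeasure (ℙ : Measure Ω')]
    {ι : Type*} [Countable ι] [Nonempty ι]
    (n : ℕ) (hn : 0 < n)
    (F : ι → D → ℝ) (hFmeas : ∀ i, Measurable (F i))
    (X : Fin n → Ω → D) (hXmeas : ∀ j, Measurable (X j))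
    (hXindep : iIndepFun X ℙ)
    (μ : Measure D) (hXdist : ∀ j, Measure.map (X j) ℙ = μ)
    (ε : Fin n → Ω' → ℝ) (hεmeas : ∀ j, Measurable (ε j))
    (hεindep : iIndepFun ε ℙ)
    (hεdist : ∀ j, Measure.map (ε j) ℙ =
      (1 / 2 : ENNReal) • Measure.dirac (1 : ℝ) +
        (1 / 2 : ENNReal) • Measure.dirac (-1 : ℝ))
    (ψ : ℝ → ℝ) (ℓ : ℝ) (hℓ : 0 ≤ ℓ)
    (hψ : ∀ a b : ℝ, |ψ a - ψ b| ≤ ℓ * |a - b|) (hψ0 : ψ 0 = 0) :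
    (∫⁻ p : Ω × Ω',
        (⨆ i, ENNReal.ofReal ((n : ℝ)⁻¹ * |∑ j, ε j p.2 * ψ (F i (X j p.1))|))
          ∂((ℙ : Measure Ω).prod ℙ)) ≤
      ENNReal.ofReal (2 * ℓ) *
        ∫⁻ p : Ω × Ω',
          (⨆ i, ENNReal.ofReal ((n : ℝ)⁻¹ * |∑ j, ε j p.2 * F i (X j p.1)|))
            ∂((ℙ : Measure Ω).prod ℙ) := by
  classical
  have hψm : Measurable ψ := by
    have hlip : LipschitzWith ℓ.toNNReal ψ := LipschitzWith.of_dist_le_mul fun a b => by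
      rw [Real.coe_toNNReal ℓ hℓ]
      simpa [Real.dist_eq] using hψ a b
    exact hlip.continuous.measurable
  set c : ℝ := (n : ℝ)⁻¹ with hcdef
  have hc : 0 ≤ c := inv_nonneg.mpr (Nat.cast_nonneg n)
  have hf1 : Measurable fun p : Ω × Ω' =>
      ⨆ i, ENNReal.ofReal (c * |∑ j, ε j p.2 * ψ (F i (X j p.1))|) :=
    Measurable.iSup fun i => ENNReal.measurable_ofReal.comp (measurable_const.mul
      ((Finset.measurable_sum _ fun j _ => ((hεmeas j).comp measurable_snd).mul
        (hψm.comp ((hFmeas i).comp ((hXmeas j).comp measurable_fst)))).abs))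
  have hf2 : Measurable fun p : Ω × Ω' =>
      ⨆ i, ENNReal.ofReal (c * |∑ j, ε j p.2 * F i (X j p.1)|) :=
    Measurable.iSup fun i => ENNReal.measurable_ofReal.comp (measurable_const.mul
      ((Finset.measurable_sum _ fun j _ => ((hεmeas j).comp measurable_snd).mul
        ((hFmeas i).comp ((hXmeas j).comp measurable_fst))).abs))
  rw [lintegral_prod _ hf1.aemeasurable, lintegral_prod _ hf2.aemeasurable]
  have hGm : ∀ u : ι → Fin n → ℝ,
      Measurable fun e : Fin n → ℝ => ⨆ i, ENNReal.ofReal (c * |∑ j, e j * u i j|) :=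
    fun u => Measurable.iSup fun i => ENNReal.measurable_ofReal.comp (measurable_const.mul
      ((Finset.measurable_sum _ fun j _ => (measurable_pi_apply j).mul_const _).abs))
  have hEm : Measurable fun ω' (j : Fin n) => ε j ω' := measurable_pi_lambda _ hεmeas
  have hmap := rademacher_map_eq ε hεmeas hεindep hεdist
  have inner : ∀ u : ι → Fin n → ℝ,
      (∫⁻ ω', ⨆ i, ENNReal.ofReal (c * |∑ j, ε j ω' * u i j|) ∂(ℙ : Measure Ω'))
        = ((2 : ENNReal)⁻¹) ^ n * ∑ s : Fin n → Bool, ⨆ i,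
            ENNReal.ofReal (c * |∑ j, (if s j then (1:ℝ) else -1) * u i j|) := by
    intro u
    have e1 : (∫⁻ ω', ⨆ i, ENNReal.ofReal (c * |∑ j, ε j ω' * u i j|) ∂(ℙ : Measure Ω'))
        = ∫⁻ e, (⨆ i, ENNReal.ofReal (c * |∑ j, e j * u i j|))
            ∂(Measure.map (fun ω' (j : Fin n) => ε j ω') ℙ) :=
      (lintegral_map (hGm u) hEm).symm
    rw [e1, hmap, lintegral_finset_sum_measure]
    simp_rw [lintegral_smul_measure, lintegral_dirac' _ (hGm u), smul_eq_mul]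
    rw [← Finset.mul_sum]
  calc (∫⁻ ω, ∫⁻ ω', ⨆ i,
          ENNReal.ofReal (c * |∑ j, ε j ω' * ψ (F i (X j ω))|) ∂(ℙ : Measure Ω') ∂(ℙ : Measure Ω))
      ≤ ∫⁻ ω, ENNReal.ofReal (2 * ℓ) * ∫⁻ ω', ⨆ i,
          ENNReal.ofReal (c * |∑ j, ε j ω' * F i (X j ω)|) ∂(ℙ : Measure Ω') ∂(ℙ : Measure Ω) := by
        refine lintegral_mono fun ω => ?_
        calc (∫⁻ ω', ⨆ i, ENNReal.ofReal (c * |∑ j, ε j ω' * ψ (F i (X j ω))|) ∂(ℙ : Measure Ω'))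
            = ((2 : ENNReal)⁻¹) ^ n * ∑ s : Fin n → Bool, ⨆ i,
                ENNReal.ofReal (c * |∑ j, (if s j then (1:ℝ) else -1) * ψ (F i (X j ω))|) :=
              inner (fun i j => ψ (F i (X j ω)))
          _ ≤ ((2 : ENNReal)⁻¹) ^ n * (ENNReal.ofReal (2 * ℓ) *
                ∑ s : Fin n → Bool, ⨆ i,
                  ENNReal.ofReal (c * |∑ j, (if s j then (1:ℝ) else -1) * F i (X j ω)|)) :=
              mul_le_mul_right (rad_comb_c c hc ψ ℓ hℓ hψ hψ0 (fun i j => F i (X j ω))) _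
          _ = ENNReal.ofReal (2 * ℓ) * (((2 : ENNReal)⁻¹) ^ n *
                ∑ s : Fin n → Bool, ⨆ i,
                  ENNReal.ofReal (c * |∑ j, (if s j then (1:ℝ) else -1) * F i (X j ω)|)) := by
              ring
          _ = ENNReal.ofReal (2 * ℓ) *
                ∫⁻ ω', ⨆ i, ENNReal.ofReal (c * |∑ j, ε j ω' * F i (X j ω)|) ∂(ℙ : Measure Ω') := by
              rw [inner (fun i j => F i (X j ω))]
    _ = ENNReal.ofReal (2 * ℓ) * ∫⁻ ω, ∫⁻ ω', ⨆ i,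
          ENNReal.ofReal (c * |∑ j, ε j ω' * F i (X j ω)|) ∂(ℙ : Measure Ω') ∂(ℙ : Measure Ω) :=
        lintegral_const_mul' _ _ ENNReal.ofReal_ne_top
end

section
/- Let F be a countable family of measurable functions from a measurable space D to ℝ with |g(x)| ≤ M_F for all g ∈ F and x ∈ D, and let f : D → ℝ be measurable with |f(x)| ≤ M_f for all x ∈ D. Then the Rademacher complexity of the squared-residual class satisfies R_n( { (g − f)² : g ∈ F } ) ≤ 4 (M_F + M_f) ( R_n(F) + R_n({f}) ). -/
open MeasureTheory ProbabilityTheory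

namespace RadSqAux

def sg (b : Bool) : ℝ := if b then 1 else -1

lemma sg_abs (b : Bool) : |sg b| = 1 := by cases b <;> simp [sg]

lemma sg_not (b : Bool) : sg (!b) = - sg b := by cases b <;> simp [sg]

lemma bddAbove_of_le {κ : Type*} (f : κ → ℝ) {c : ℝ} (h : ∀ k, f k ≤ c) :
    BddAbove (Set.range f) := ⟨c, by rintro _ ⟨k, rfl⟩; exact h k⟩

lemma sup_pair {κ : Type*} [Nonempty κ] (A φv tv : κ → ℝ) (L : ℝ)
    (hLip : ∀ k k', |φv k - φv k'| ≤ L * |tv k - tv k'|)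
    (h1 : BddAbove (Set.range fun k => A k + L * tv k))
    (h2 : BddAbove (Set.range fun k => A k - L * tv k)) :
    (⨆ k, (A k + φv k)) + (⨆ k, (A k - φv k)) ≤
      (⨆ k, (A k + L * tv k)) + (⨆ k, (A k - L * tv k)) := by
  set R : ℝ := (⨆ k, (A k + L * tv k)) + (⨆ k, (A k - L * tv k)) with hR
  have key : ∀ k k', (A k + φv k) + (A k' - φv k') ≤ R := by
    intro k k'
    have hl := hLip k k'
    have h1k : A k + L * tv k ≤ ⨆ k, (A k + L * tv k) := le_ciSup h1 k
    have h1k' : A k' + L * tv k' ≤ ⨆ k, (A k + L * tv k) := le_ciSup h1 k'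
    have h2k : A k - L * tv k ≤ ⨆ k, (A k - L * tv k) := le_ciSup h2 k
    have h2k' : A k' - L * tv k' ≤ ⨆ k, (A k - L * tv k) := le_ciSup h2 k'
    have habs : φv k - φv k' ≤ |φv k - φv k'| := le_abs_self _
    rcases le_total (tv k') (tv k) with h | h
    · have he : |tv k - tv k'| = tv k - tv k' := abs_of_nonneg (by linarith)
      rw [he] at hl; rw [hR]; nlinarith
    · have he : |tv k - tv k'| = tv k' - tv k := by
        rw [abs_sub_comm]; exact abs_of_nonneg (by linarith)
      rw [he] at hl; rw [hR]; nlinarith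
  have main : (⨆ k, (A k + φv k)) ≤ R - (⨆ k, (A k - φv k)) := by
    refine ciSup_le fun k => ?_
    have h' : (⨆ k', (A k' - φv k')) ≤ R - (A k + φv k) :=
      ciSup_le fun k' => by linarith [key k k']
    linarith
  linarith

lemma abs_sum_le {n : ℕ} (b : Fin n → Bool) (x : Fin n → ℝ) {c : ℝ}
    (h : ∀ j, |x j| ≤ c) : |∑ j, sg (b j) * x j| ≤ n * c := by
  calc |∑ j, sg (b j) * x j| ≤ ∑ j, |sg (b j) * x j| := Finset.abs_sum_le_sum_abs _ _
    _ ≤ ∑ _j : Fin n, c := by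
        refine Finset.sum_le_sum fun j _ => ?_
        rw [abs_mul, sg_abs, one_mul]; exact h j
    _ = n * c := by simp [mul_comm]

lemma contraction_noabs {κ : Type*} [Nonempty κ] {n : ℕ} (u w : κ → Fin n → ℝ)
    (L C : ℝ)
    (hLip : ∀ j k k', |u k j - u k' j| ≤ L * |w k j - w k' j|)
    (hCu : ∀ k j, |u k j| ≤ C) (hCw : ∀ k j, |L * w k j| ≤ C) :
    ∑ b : Fin n → Bool, (⨆ k, ∑ j, sg (b j) * u k j)
      ≤ ∑ b : Fin n → Bool, (⨆ k, ∑ j, sg (b j) * (L * w k j)) := by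
  classical
  set g : Finset (Fin n) → (Fin n → Bool) → κ → ℝ :=
    fun J b k => ∑ j, sg (b j) * (if j ∈ J then L * w k j else u k j) with hg
  have hterm : ∀ (J : Finset (Fin n)) (b : Fin n → Bool) (k : κ) (j : Fin n),
      |sg (b j) * (if j ∈ J then L * w k j else u k j)| ≤ C := by
    intro J b k j
    rw [abs_mul, sg_abs, one_mul]
    split
    · exact hCw k j
    · exact hCu k j
  have hsum : ∀ (J : Finset (Fin n)) (b : Fin n → Bool) (k : κ) (s : Finset (Fin n)),
      ∑ j ∈ s, sg (b j) * (if j ∈ J then L * w k j else u k j) ≤ (s.card : ℝ) * C := by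
    intro J b k s
    calc ∑ j ∈ s, sg (b j) * (if j ∈ J then L * w k j else u k j)
        ≤ ∑ _j ∈ s, C := Finset.sum_le_sum fun j _ => (le_abs_self _).trans (hterm J b k j)
      _ = (s.card : ℝ) * C := by simp [mul_comm]
  have main : ∀ J : Finset (Fin n),
      ∑ b : Fin n → Bool, (⨆ k, g ∅ b k) ≤ ∑ b : Fin n → Bool, (⨆ k, g J b k) := by
    intro J
    induction J using Finset.induction_on with
    | empty => exact le_rfl
    | @insert a J ha IH =>
      refine IH.trans ?_
      have hC0 : (0:ℝ) ≤ C := (abs_nonneg _).trans (hCu (Classical.arbitrary κ) a)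
      set flip : (Fin n → Bool) → (Fin n → Bool) := fun b => Function.update b a (!(b a))
        with hflipdef
      have hflipa : ∀ b, flip b a = !(b a) := fun b => Function.update_self a _ b
      have hflipj : ∀ b j, j ≠ a → flip b j = b j := fun b j hj => Function.update_of_ne hj _ _
      have hinv : Function.Involutive flip := by
        intro b; funext j
        rcases eq_or_ne j a with rfl | hj
        · rw [hflipa, hflipa, Bool.not_not]
        · rw [hflipj _ j hj, hflipj _ j hj]
      have hsumflip : ∀ G : (Fin n → Bool) → ℝ, ∑ b, G (flip b) = ∑ b, G b :=
        fun G => Equiv.sum_comp (Function.Involutive.toPerm flip hinv) G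
      have pointwise : ∀ b, (⨆ k, g J b k) + (⨆ k, g J (flip b) k)
          ≤ (⨆ k, g (insert a J) b k) + (⨆ k, g (insert a J) (flip b) k) := by
        intro b
        set s : ℝ := sg (b a) with hs
        set R : κ → ℝ := fun k => ∑ j ∈ Finset.univ.erase a,
            sg (b j) * (if j ∈ J then L * w k j else u k j) with hRdef
        have hsabs : |s| = 1 := sg_abs _
        have herase : ∀ (c : Fin n → ℝ) k, ∑ j ∈ Finset.univ.erase a,
            sg (flip b j) * (if j ∈ J then L * w k j else u k j)
            = R k := by
          intro c k
          exact Finset.sum_congr rfl fun j hj => by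
            rw [hflipj b j (Finset.ne_of_mem_erase hj)]
        have herase2 : ∀ (b' : Fin n → Bool) k, ∑ j ∈ Finset.univ.erase a,
            sg (b' j) * (if j ∈ insert a J then L * w k j else u k j)
            = ∑ j ∈ Finset.univ.erase a, sg (b' j) * (if j ∈ J then L * w k j else u k j) := by
          intro b' k
          refine Finset.sum_congr rfl fun j hj => ?_
          have hne := Finset.ne_of_mem_erase hj
          simp [Finset.mem_insert, hne]
        have dec1 : ∀ k, g J b k = R k + s * u k a := by
          intro k
          calc g J b k = sg (b a) * (if a ∈ J then L * w k a else u k a) + R k :=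
                (Finset.add_sum_erase _ _ (Finset.mem_univ a)).symm
            _ = R k + s * u k a := by rw [if_neg ha, hs]; ring
        have dec2 : ∀ k, g J (flip b) k = R k - s * u k a := by
          intro k
          calc g J (flip b) k
              = sg (flip b a) * (if a ∈ J then L * w k a else u k a)
                + ∑ j ∈ Finset.univ.erase a,
                  sg (flip b j) * (if j ∈ J then L * w k j else u k j) :=
                (Finset.add_sum_erase _ _ (Finset.mem_univ a)).symm
            _ = R k - s * u k a := by
                rw [if_neg ha, hflipa, sg_not, herase (fun _ => 0) k, hs]; ring
        have dec3 : ∀ k, g (insert a J) b k = R k + L * (s * w k a) := by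
          intro k
          calc g (insert a J) b k
              = sg (b a) * (if a ∈ insert a J then L * w k a else u k a)
                + ∑ j ∈ Finset.univ.erase a,
                  sg (b j) * (if j ∈ insert a J then L * w k j else u k j) :=
                (Finset.add_sum_erase _ _ (Finset.mem_univ a)).symm
            _ = R k + L * (s * w k a) := by
                rw [if_pos (Finset.mem_insert_self a J),
                  show (∑ j ∈ Finset.univ.erase a,
                    sg (b j) * (if j ∈ insert a J then L * w k j else u k j)) = R k from
                    herase2 b k, hs]
                ring
        have dec4 : ∀ k, g (insert a J) (flip b) k = R k - L * (s * w k a) := by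
          intro k
          calc g (insert a J) (flip b) k
              = sg (flip b a) * (if a ∈ insert a J then L * w k a else u k a)
                + ∑ j ∈ Finset.univ.erase a,
                  sg (flip b j) * (if j ∈ insert a J then L * w k j else u k j) :=
                (Finset.add_sum_erase _ _ (Finset.mem_univ a)).symm
            _ = R k - L * (s * w k a) := by
                rw [if_pos (Finset.mem_insert_self a J), hflipa, sg_not,
                  show (∑ j ∈ Finset.univ.erase a,
                    sg (flip b j) * (if j ∈ insert a J then L * w k j else u k j)) = R k from
                    (herase2 (flip b) k).trans (herase (fun _ => 0) k), hs]
                ring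
        have hRle : ∀ k, R k ≤ (n:ℝ) * C := by
          intro k
          refine (hsum J b k _).trans ?_
          have : ((Finset.univ.erase a).card : ℝ) ≤ (n : ℝ) := by
            have := Finset.card_le_univ (Finset.univ.erase a)
            exact_mod_cast this.trans (le_of_eq (Finset.card_univ.trans (by simp)))
          exact mul_le_mul_of_nonneg_right this hC0
        have hwle : ∀ k, |s * w k a| ≤ |w k a| := by
          intro k; rw [abs_mul, hsabs, one_mul]
        have hLs : ∀ k, L * (s * w k a) ≤ C := by
          intro k
          have : L * (s * w k a) = s * (L * w k a) := by ring
          rw [this]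
          calc s * (L * w k a) ≤ |s * (L * w k a)| := le_abs_self _
            _ = |L * w k a| := by rw [abs_mul, hsabs, one_mul]
            _ ≤ C := hCw k a
        have hLs' : ∀ k, -(L * (s * w k a)) ≤ C := by
          intro k
          have : -(L * (s * w k a)) = (-s) * (L * w k a) := by ring
          rw [this]
          calc (-s) * (L * w k a) ≤ |(-s) * (L * w k a)| := le_abs_self _
            _ = |L * w k a| := by rw [abs_mul, abs_neg, hsabs, one_mul]
            _ ≤ C := hCw k a
        have h1 : BddAbove (Set.range fun k => R k + L * (s * w k a)) :=
          bddAbove_of_le _ (c := (n:ℝ) * C + C) fun k => by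
            have := hRle k; have := hLs k; linarith
        have h2 : BddAbove (Set.range fun k => R k - L * (s * w k a)) :=
          bddAbove_of_le _ (c := (n:ℝ) * C + C) fun k => by
            have := hRle k; have := hLs' k; linarith
        have hLip' : ∀ k k', |s * u k a - s * u k' a| ≤ L * |s * w k a - s * w k' a| := by
          intro k k'
          have e1 : s * u k a - s * u k' a = s * (u k a - u k' a) := by ring
          have e2 : s * w k a - s * w k' a = s * (w k a - w k' a) := by ring
          rw [e1, e2, abs_mul, abs_mul, hsabs, one_mul, one_mul]
          exact hLip a k k'
        have hsp := sup_pair R (fun k => s * u k a) (fun k => s * w k a) L hLip' h1 h2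
        have r1 : (⨆ k, g J b k) = ⨆ k, (R k + s * u k a) := iSup_congr dec1
        have r2 : (⨆ k, g J (flip b) k) = ⨆ k, (R k - s * u k a) := iSup_congr dec2
        have r3 : (⨆ k, g (insert a J) b k) = ⨆ k, (R k + L * (s * w k a)) := iSup_congr dec3
        have r4 : (⨆ k, g (insert a J) (flip b) k) = ⨆ k, (R k - L * (s * w k a)) :=
          iSup_congr dec4
        rw [r1, r2, r3, r4]
        exact hsp
      have e1 : ∑ b : Fin n → Bool, (⨆ k, g J b k)
          = (1/2) * ∑ b : Fin n → Bool, ((⨆ k, g J b k) + (⨆ k, g J (flip b) k)) := by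
        rw [Finset.sum_add_distrib, hsumflip (fun b => ⨆ k, g J b k)]; ring
      have e2 : ∑ b : Fin n → Bool, (⨆ k, g (insert a J) b k)
          = (1/2) * ∑ b : Fin n → Bool,
            ((⨆ k, g (insert a J) b k) + (⨆ k, g (insert a J) (flip b) k)) := by
        rw [Finset.sum_add_distrib, hsumflip (fun b => ⨆ k, g (insert a J) b k)]; ring
      rw [e1, e2]
      exact mul_le_mul_of_nonneg_left
        (Finset.sum_le_sum fun b _ => pointwise b) (by norm_num)
  have h := main Finset.univ
  have hl : ∀ b k, g ∅ b k = ∑ j, sg (b j) * u k j := by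
    intro b k; rw [hg]; simp
  have hr : ∀ b k, g Finset.univ b k = ∑ j, sg (b j) * (L * w k j) := by
    intro b k; rw [hg]; simp
  calc ∑ b : Fin n → Bool, (⨆ k, ∑ j, sg (b j) * u k j)
      = ∑ b : Fin n → Bool, (⨆ k, g ∅ b k) := by
        refine Finset.sum_congr rfl fun b _ => ?_
        exact (iSup_congr (hl b)).symm
    _ ≤ ∑ b : Fin n → Bool, (⨆ k, g Finset.univ b k) := h
    _ = ∑ b : Fin n → Bool, (⨆ k, ∑ j, sg (b j) * (L * w k j)) := by
        refine Finset.sum_congr rfl fun b _ => ?_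
        exact iSup_congr (hr b)


lemma contraction_abs {ι : Type*} [Nonempty ι] {n : ℕ} (q t : ι → Fin n → ℝ) (L C : ℝ)
    (hLip : ∀ j i i', |q i j - q i' j| ≤ L * |t i j - t i' j|)
    (h0 : ∀ i j, |q i j| ≤ L * |t i j|)
    (hCq : ∀ i j, |q i j| ≤ C) (hCt : ∀ i j, |L * t i j| ≤ C) :
    ∑ b : Fin n → Bool, (⨆ i, |∑ j, sg (b j) * q i j|)
      ≤ 2 * ∑ b : Fin n → Bool, (⨆ i, |∑ j, sg (b j) * (L * t i j)|) := by
  classical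
  set up : Option ι → Fin n → ℝ := fun k j => Option.elim k 0 (fun i => q i j) with hup
  set um : Option ι → Fin n → ℝ := fun k j => Option.elim k 0 (fun i => -(q i j)) with hum
  set wo : Option ι → Fin n → ℝ := fun k j => Option.elim k 0 (fun i => t i j) with hwo
  have hC0 : ∀ j : Fin n, (0:ℝ) ≤ C :=
    fun j => (abs_nonneg _).trans (hCq (Classical.arbitrary ι) j)
  have hLipP : ∀ j k k', |up k j - up k' j| ≤ L * |wo k j - wo k' j| := by
    intro j k k'
    match k, k' with
    | some i, some i' => exact hLip j i i'
    | some i, none =>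
      show |q i j - 0| ≤ L * |t i j - 0|
      rw [sub_zero, sub_zero]; exact h0 i j
    | none, some i' =>
      show |0 - q i' j| ≤ L * |0 - t i' j|
      rw [zero_sub, zero_sub, abs_neg, abs_neg]; exact h0 i' j
    | none, none =>
      show |(0:ℝ) - 0| ≤ L * |(0:ℝ) - 0|
      simp
  have hLipM : ∀ j k k', |um k j - um k' j| ≤ L * |wo k j - wo k' j| := by
    intro j k k'
    match k, k' with
    | some i, some i' =>
      show |-(q i j) - -(q i' j)| ≤ L * |t i j - t i' j|
      have e : -(q i j) - -(q i' j) = -(q i j - q i' j) := by ring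
      rw [e, abs_neg]; exact hLip j i i'
    | some i, none =>
      show |-(q i j) - 0| ≤ L * |t i j - 0|
      rw [sub_zero, sub_zero, abs_neg]; exact h0 i j
    | none, some i' =>
      show |0 - -(q i' j)| ≤ L * |0 - t i' j|
      rw [zero_sub, zero_sub, abs_neg, abs_neg, abs_neg]; exact h0 i' j
    | none, none =>
      show |(0:ℝ) - 0| ≤ L * |(0:ℝ) - 0|
      simp
  have hCup : ∀ k j, |up k j| ≤ C := by
    intro k j
    match k with
    | some i => exact hCq i j
    | none => show |(0:ℝ)| ≤ C; simpa using hC0 j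
  have hCum : ∀ k j, |um k j| ≤ C := by
    intro k j
    match k with
    | some i => show |-(q i j)| ≤ C; rw [abs_neg]; exact hCq i j
    | none => show |(0:ℝ)| ≤ C; simpa using hC0 j
  have hCwo : ∀ k j, |L * wo k j| ≤ C := by
    intro k j
    match k with
    | some i => exact hCt i j
    | none => show |L * (0:ℝ)| ≤ C; simpa using hC0 j
  have c1 := contraction_noabs up wo L C hLipP hCup hCwo
  have c2 := contraction_noabs um wo L C hLipM hCum hCwo
  have bddP : ∀ b : Fin n → Bool, BddAbove (Set.range fun k => ∑ j, sg (b j) * up k j) :=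
    fun b => bddAbove_of_le _ (c := (n:ℝ) * C) fun k =>
      (le_abs_self _).trans (abs_sum_le b _ fun j => hCup k j)
  have bddM : ∀ b : Fin n → Bool, BddAbove (Set.range fun k => ∑ j, sg (b j) * um k j) :=
    fun b => bddAbove_of_le _ (c := (n:ℝ) * C) fun k =>
      (le_abs_self _).trans (abs_sum_le b _ fun j => hCum k j)
  have bddQ : ∀ b : Fin n → Bool, BddAbove (Set.range fun i => |∑ j, sg (b j) * (L * t i j)|) :=
    fun b => bddAbove_of_le _ (c := (n:ℝ) * C) fun i =>
      abs_sum_le b _ fun j => hCt i j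
  have step1 : ∀ b : Fin n → Bool, (⨆ i, |∑ j, sg (b j) * q i j|)
      ≤ (⨆ k, ∑ j, sg (b j) * up k j) + (⨆ k, ∑ j, sg (b j) * um k j) := by
    intro b
    refine ciSup_le fun i => ?_
    have hz : (0:ℝ) = ∑ _j : Fin n, sg (b _j) * (0:ℝ) := by simp
    have hposP : (0:ℝ) ≤ ⨆ k, ∑ j, sg (b j) * up k j :=
      le_trans (le_of_eq hz)
        ((le_ciSup (bddP b) (none : Option ι)) :
          (∑ j, sg (b j) * (0:ℝ)) ≤ ⨆ k, ∑ j, sg (b j) * up k j)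
    have hposM : (0:ℝ) ≤ ⨆ k, ∑ j, sg (b j) * um k j :=
      le_trans (le_of_eq hz)
        ((le_ciSup (bddM b) (none : Option ι)) :
          (∑ j, sg (b j) * (0:ℝ)) ≤ ⨆ k, ∑ j, sg (b j) * um k j)
    have hP : (∑ j, sg (b j) * q i j) ≤ ⨆ k, ∑ j, sg (b j) * up k j :=
      le_ciSup (bddP b) (some i)
    have hM : -(∑ j, sg (b j) * q i j) ≤ ⨆ k, ∑ j, sg (b j) * um k j := by
      have h : (∑ j, sg (b j) * (-(q i j))) ≤ ⨆ k, ∑ j, sg (b j) * um k j :=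
        le_ciSup (bddM b) (some i)
      have e : (∑ j, sg (b j) * (-(q i j))) = -(∑ j, sg (b j) * q i j) := by
        simp [mul_neg]
      rwa [e] at h
    rw [abs_le]
    constructor <;> linarith
  have step3 : ∀ b : Fin n → Bool, (⨆ k, ∑ j, sg (b j) * (L * wo k j))
      ≤ ⨆ i, |∑ j, sg (b j) * (L * t i j)| := by
    intro b
    refine ciSup_le fun k => ?_
    match k with
    | none =>
      show (∑ j, sg (b j) * (L * (0:ℝ))) ≤ ⨆ i, |∑ j, sg (b j) * (L * t i j)|
      have e : (∑ j, sg (b j) * (L * (0:ℝ))) = 0 := by simp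
      rw [e]
      exact (abs_nonneg _).trans (le_ciSup (bddQ b) (Classical.arbitrary ι))
    | some i =>
      exact (le_abs_self _).trans (le_ciSup (bddQ b) i)
  calc ∑ b : Fin n → Bool, (⨆ i, |∑ j, sg (b j) * q i j|)
      ≤ ∑ b : Fin n → Bool, ((⨆ k, ∑ j, sg (b j) * up k j)
          + (⨆ k, ∑ j, sg (b j) * um k j)) := Finset.sum_le_sum fun b _ => step1 b
    _ = (∑ b : Fin n → Bool, (⨆ k, ∑ j, sg (b j) * up k j))
        + ∑ b : Fin n → Bool, (⨆ k, ∑ j, sg (b j) * um k j) := Finset.sum_add_distrib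
    _ ≤ (∑ b : Fin n → Bool, (⨆ k, ∑ j, sg (b j) * (L * wo k j)))
        + ∑ b : Fin n → Bool, (⨆ k, ∑ j, sg (b j) * (L * wo k j)) := add_le_add c1 c2
    _ ≤ (∑ b : Fin n → Bool, (⨆ i, |∑ j, sg (b j) * (L * t i j)|))
        + ∑ b : Fin n → Bool, (⨆ i, |∑ j, sg (b j) * (L * t i j)|) :=
        add_le_add (Finset.sum_le_sum fun b _ => step3 b) (Finset.sum_le_sum fun b _ => step3 b)
    _ = 2 * ∑ b : Fin n → Bool, (⨆ i, |∑ j, sg (b j) * (L * t i j)|) := by ring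

lemma key_finite {ι : Type*} [Nonempty ι] {n : ℕ} (t : ι → Fin n → ℝ) (M : ℝ)
    (hM0 : 0 ≤ M) (hb : ∀ i j, |t i j| ≤ M) :
    ∑ b : Fin n → Bool, (⨆ i, |∑ j, sg (b j) * (t i j) ^ 2|)
      ≤ (4 * M) * ∑ b : Fin n → Bool, (⨆ i, |∑ j, sg (b j) * t i j|) := by
  classical
  have hLip : ∀ (j : Fin n) i i', |(t i j) ^ 2 - (t i' j) ^ 2| ≤ (2 * M) * |t i j - t i' j| := by
    intro j i i'
    have e : (t i j) ^ 2 - (t i' j) ^ 2 = (t i j + t i' j) * (t i j - t i' j) := by ring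
    rw [e, abs_mul]
    have h : |t i j + t i' j| ≤ 2 * M := by
      have h1 := hb i j; have h2 := hb i' j
      calc |t i j + t i' j| ≤ |t i j| + |t i' j| := abs_add_le _ _
        _ ≤ 2 * M := by linarith
    exact mul_le_mul_of_nonneg_right h (abs_nonneg _)
  have h0 : ∀ i (j : Fin n), |(t i j) ^ 2| ≤ (2 * M) * |t i j| := by
    intro i j
    have e : |(t i j) ^ 2| = |t i j| ^ 2 := by rw [sq_abs]; exact abs_of_nonneg (sq_nonneg _)
    rw [e]
    have := hb i j
    nlinarith [abs_nonneg (t i j)]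
  have hCq : ∀ i (j : Fin n), |(t i j) ^ 2| ≤ 2 * M ^ 2 := by
    intro i j
    have e : |(t i j) ^ 2| = |t i j| ^ 2 := by rw [sq_abs]; exact abs_of_nonneg (sq_nonneg _)
    rw [e]
    have := hb i j
    nlinarith [abs_nonneg (t i j)]
  have hCt : ∀ i (j : Fin n), |(2 * M) * t i j| ≤ 2 * M ^ 2 := by
    intro i j
    rw [abs_mul, abs_of_nonneg (by linarith : (0:ℝ) ≤ 2 * M)]
    have := hb i j
    nlinarith [abs_nonneg (t i j)]
  have c := contraction_abs (fun i j => (t i j) ^ 2) t (2 * M) (2 * M ^ 2) hLip h0 hCq hCt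
  have inner : ∀ (b : Fin n → Bool) i,
      |∑ j, sg (b j) * ((2 * M) * t i j)| = (2 * M) * |∑ j, sg (b j) * t i j| := by
    intro b i
    have e : (∑ j, sg (b j) * ((2 * M) * t i j)) = (2 * M) * ∑ j, sg (b j) * t i j := by
      rw [Finset.mul_sum]
      exact Finset.sum_congr rfl fun j _ => by ring
    rw [e, abs_mul, abs_of_nonneg (by linarith : (0:ℝ) ≤ 2 * M)]
  have sup_eq : ∀ b : Fin n → Bool,
      (⨆ i, |∑ j, sg (b j) * ((2 * M) * t i j)|)
        = (2 * M) * ⨆ i, |∑ j, sg (b j) * t i j| := by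
    intro b
    rw [Real.mul_iSup_of_nonneg (by linarith : (0:ℝ) ≤ 2 * M)]
    exact iSup_congr fun i => inner b i
  calc ∑ b : Fin n → Bool, (⨆ i, |∑ j, sg (b j) * (t i j) ^ 2|)
      ≤ 2 * ∑ b : Fin n → Bool, (⨆ i, |∑ j, sg (b j) * ((2 * M) * t i j)|) := c
    _ = 2 * ∑ b : Fin n → Bool, ((2 * M) * ⨆ i, |∑ j, sg (b j) * t i j|) := by
        rw [Finset.sum_congr rfl fun b _ => sup_eq b]
    _ = (4 * M) * ∑ b : Fin n → Bool, (⨆ i, |∑ j, sg (b j) * t i j|) := by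
        rw [← Finset.mul_sum]; ring

lemma map_eps {Ω' : Type*} [MeasureSpace Ω'] [IsProbabilityMeasure (ℙ : Measure Ω')]
    {n : ℕ} (ε : Fin n → Ω' → ℝ) (hεmeas : ∀ j, Measurable (ε j))
    (hεindep : iIndepFun ε ℙ)
    (hεdist : ∀ j, Measure.map (ε j) ℙ =
      (1 / 2 : ENNReal) • Measure.dirac (1 : ℝ) + (1 / 2 : ENNReal) • Measure.dirac (-1 : ℝ)) :
    Measure.map (fun ω' (j : Fin n) => ε j ω') ℙ
      = ∑ b : Fin n → Bool, ((2:ENNReal)⁻¹) ^ n • Measure.dirac (fun j => sg (b j)) := by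
  classical
  set μR : Measure ℝ := (1 / 2 : ENNReal) • Measure.dirac (1 : ℝ)
    + (1 / 2 : ENNReal) • Measure.dirac (-1 : ℝ) with hμR
  have hprob : IsProbabilityMeasure μR := by
    constructor
    rw [hμR]
    simp only [Measure.coe_add, Pi.add_apply, Measure.smul_apply, smul_eq_mul,
      Measure.dirac_apply, Set.indicator_of_mem (Set.mem_univ _), Pi.one_apply, mul_one, one_div]
    exact ENNReal.inv_two_add_inv_two
  have hvec : Measurable (fun ω' (j : Fin n) => ε j ω') :=
    measurable_pi_lambda _ (fun j => hεmeas j)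
  have heq1 : Measure.pi (fun _ : Fin n => μR) = Measure.map (fun ω' (j : Fin n) => ε j ω') ℙ := by
    refine Measure.pi_eq fun s hs => ?_
    rw [Measure.map_apply hvec (MeasurableSet.univ_pi hs)]
    have hpre : (fun ω' (j : Fin n) => ε j ω') ⁻¹' Set.univ.pi s
        = ⋂ j ∈ Finset.univ, ε j ⁻¹' s j := by
      ext ω'; simp [Set.mem_pi]
    rw [hpre, hεindep.measure_inter_preimage_eq_mul Finset.univ (fun j _ => hs j)]
    exact Finset.prod_congr rfl fun j _ => by
      rw [← Measure.map_apply (hεmeas j) (hs j), hεdist j, hμR]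
  have heq2 : Measure.pi (fun _ : Fin n => μR)
      = ∑ b : Fin n → Bool, ((2:ENNReal)⁻¹) ^ n • Measure.dirac (fun j => sg (b j)) := by
    refine Measure.pi_eq fun s hs => ?_
    rw [Measure.finset_sum_apply]
    simp only [Measure.smul_apply, smul_eq_mul]
    have hd : ∀ b : Fin n → Bool, Measure.dirac (fun j => sg (b j)) (Set.univ.pi s)
        = ∏ j, (s j).indicator (1 : ℝ → ENNReal) (sg (b j)) := by
      intro b
      rw [Measure.dirac_apply]
      by_cases h : (fun j => sg (b j)) ∈ Set.univ.pi s
      · rw [Set.indicator_of_mem h]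
        rw [Set.mem_pi] at h
        have h1 : ∀ j : Fin n, (s j).indicator (1 : ℝ → ENNReal) (sg (b j)) = 1 :=
          fun j => by rw [Set.indicator_of_mem (h j (Set.mem_univ j))]; rfl
        simp [h1]
      · rw [Set.indicator_of_notMem h]
        rw [Set.mem_pi] at h; push_neg at h
        obtain ⟨j, _, hj⟩ := h
        symm
        exact Finset.prod_eq_zero (Finset.mem_univ j) (Set.indicator_of_notMem hj 1)
    calc (∑ b : Fin n → Bool, ((2:ENNReal)⁻¹) ^ n * Measure.dirac (fun j => sg (b j)) (Set.univ.pi s))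
        = ∑ b : Fin n → Bool, ∏ j : Fin n,
            (2:ENNReal)⁻¹ * (s j).indicator (1 : ℝ → ENNReal) (sg (b j)) := by
          refine Finset.sum_congr rfl fun b _ => ?_
          rw [hd b, Finset.prod_mul_distrib, Finset.prod_const]
          simp [Finset.card_univ]
      _ = ∏ j : Fin n, ∑ x : Bool, (2:ENNReal)⁻¹ * (s j).indicator (1 : ℝ → ENNReal) (sg x) := by
          rw [Finset.prod_univ_sum]
          rw [Fintype.piFinset_univ]
      _ = ∏ j : Fin n, μR (s j) := by
          refine Finset.prod_congr rfl fun j _ => ?_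
          rw [Fintype.sum_bool]
          rw [hμR]
          simp only [Measure.coe_add, Pi.add_apply, Measure.smul_apply, smul_eq_mul,
            Measure.dirac_apply, one_div, sg]
          norm_num
  rw [← heq1, heq2]

lemma integral_eps {Ω' : Type*} [MeasureSpace Ω'] [IsProbabilityMeasure (ℙ : Measure Ω')]
    {n : ℕ} (ε : Fin n → Ω' → ℝ) (hεmeas : ∀ j, Measurable (ε j))
    (hεindep : iIndepFun ε ℙ)
    (hεdist : ∀ j, Measure.map (ε j) ℙ =
      (1 / 2 : ENNReal) • Measure.dirac (1 : ℝ) + (1 / 2 : ENNReal) • Measure.dirac (-1 : ℝ))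
    (H : (Fin n → ℝ) → ℝ) (hH : Measurable H) :
    ∫ ω', H (fun j => ε j ω') ∂ℙ
      = ((2:ℝ) ^ n)⁻¹ * ∑ b : Fin n → Bool, H (fun j => sg (b j)) := by
  classical
  have hvec : Measurable (fun ω' (j : Fin n) => ε j ω') :=
    measurable_pi_lambda _ (fun j => hεmeas j)
  have h1 : ∫ ω', H (fun j => ε j ω') ∂ℙ
      = ∫ y, H y ∂(Measure.map (fun ω' (j : Fin n) => ε j ω') ℙ) :=
    (integral_map hvec.aemeasurable hH.aestronglyMeasurable).symm
  rw [h1, map_eps ε hεmeas hεindep hεdist]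
  have hInt : ∀ b : Fin n → Bool,
      Integrable H (((2:ENNReal)⁻¹) ^ n • Measure.dirac (fun j => sg (b j))) := by
    intro b
    refine Integrable.smul_measure ?_ (by simp)
    exact (integrable_const (H (fun j => sg (b j)))).congr (ae_eq_dirac H).symm
  rw [integral_finset_sum_measure (fun b _ => hInt b)]
  have h2 : ∀ b : Fin n → Bool,
      ∫ y, H y ∂(((2:ENNReal)⁻¹) ^ n • Measure.dirac (fun j => sg (b j)))
        = ((2:ℝ) ^ n)⁻¹ * H (fun j => sg (b j)) := by
    intro b
    rw [integral_smul_measure, integral_dirac]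
    simp [ENNReal.toReal_pow, smul_eq_mul, ← inv_pow]
  rw [Finset.sum_congr rfl fun b _ => h2 b, ← Finset.mul_sum]

lemma abs_sum_mul_le {n : ℕ} (e x : Fin n → ℝ) {c : ℝ}
    (he : ∀ j, |e j| ≤ 1) (hx : ∀ j, |x j| ≤ c) : |∑ j, e j * x j| ≤ n * c := by
  calc |∑ j, e j * x j| ≤ ∑ j, |e j * x j| := Finset.abs_sum_le_sum_abs _ _
    _ ≤ ∑ _j : Fin n, c := by
        refine Finset.sum_le_sum fun j _ => ?_
        rw [abs_mul]
        calc |e j| * |x j| ≤ 1 * c :=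
              mul_le_mul (he j) (hx j) (abs_nonneg _) zero_le_one
          _ = c := one_mul c
    _ = n * c := by simp [mul_comm]

end RadSqAux

open RadSqAux


/-- Rademacher complexity of the squared-residual class: if the family `F = {F i}` is
uniformly bounded by `M_F` and `f` is bounded by `M_f`, then
`R_n({(g - f)² : g ∈ F}) ≤ 4 (M_F + M_f) (R_n(F) + R_n({f}))`, where the Rademacher
complexities are computed with i.i.d. samples `X_j` and independent i.i.d. Rademacher
signs `ε_j` (modeled on a product probability space). -/
theorem rademacher_squared_residual_bound
    {D : Type*} [MeasurableSpace D]
    {Ω : Type*} [MeasureSpace Ω] [IsProbabilityMeasure (ℙ : Measure Ω)]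
    {Ω' : Type*} [MeasureSpace Ω'] [IsProbabilityMeasure (ℙ : Measure Ω')]
    {ι : Type*} [Countable ι] [Nonempty ι]
    (n : ℕ) (hn : 0 < n)
    (F : ι → D → ℝ) (hFmeas : ∀ i, Measurable (F i))
    (MF : ℝ) (hMF : ∀ i x, |F i x| ≤ MF)
    (f : D → ℝ) (hfmeas : Measurable f)
    (Mf : ℝ) (hMf : ∀ x, |f x| ≤ Mf)
    (X : Fin n → Ω → D) (hXmeas : ∀ j, Measurable (X j))
    (hXindep : iIndepFun X ℙ)
    (μ : Measure D) (hXdist : ∀ j, Measure.map (X j) ℙ = μ)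
    (ε : Fin n → Ω' → ℝ) (hεmeas : ∀ j, Measurable (ε j))
    (hεindep : iIndepFun ε ℙ)
    (hεdist : ∀ j, Measure.map (ε j) ℙ =
      (1 / 2 : ENNReal) • Measure.dirac (1 : ℝ) +
        (1 / 2 : ENNReal) • Measure.dirac (-1 : ℝ)) :
    (∫ p : Ω × Ω',
        (⨆ i, (n : ℝ)⁻¹ * |∑ j, ε j p.2 * (F i (X j p.1) - f (X j p.1)) ^ 2|)
          ∂((ℙ : Measure Ω).prod ℙ)) ≤
      4 * (MF + Mf) *
        ((∫ p : Ω × Ω',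
            (⨆ i, (n : ℝ)⁻¹ * |∑ j, ε j p.2 * F i (X j p.1)|)
              ∂((ℙ : Measure Ω).prod ℙ)) +
          ∫ p : Ω × Ω',
            (n : ℝ)⁻¹ * |∑ j, ε j p.2 * f (X j p.1)|
              ∂((ℙ : Measure Ω).prod ℙ)) := by
  classical
  have hΩne : Nonempty Ω := by
    by_contra h
    rw [not_nonempty_iff] at h
    have h1 : (ℙ : Measure Ω) Set.univ = 1 := measure_univ
    rw [Set.univ_eq_empty_iff.mpr h, measure_empty] at h1
    exact one_ne_zero h1.symm
  obtain ⟨ω₀⟩ := hΩne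
  have i₀ : ι := Classical.arbitrary ι
  have hMF0 : 0 ≤ MF := (abs_nonneg _).trans (hMF i₀ (X ⟨0, hn⟩ ω₀))
  have hMf0 : 0 ≤ Mf := (abs_nonneg _).trans (hMf (X ⟨0, hn⟩ ω₀))
  have hM0 : 0 ≤ MF + Mf := by linarith
  have hn0 : (0:ℝ) < n := by exact_mod_cast hn
  have hninv : (0:ℝ) ≤ (n:ℝ)⁻¹ := by positivity
  -- bound on squared residual values
  have hres : ∀ i (x : D), |F i x - f x| ≤ MF + Mf := by
    intro i x
    rw [sub_eq_add_neg]
    refine (abs_add_le _ _).trans ?_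
    rw [abs_neg]
    exact add_le_add (hMF i x) (hMf x)
  have hsq : ∀ i (x : D), |(F i x - f x) ^ 2| ≤ (MF + Mf) ^ 2 := by
    intro i x
    rw [abs_of_nonneg (sq_nonneg _), ← sq_abs]
    exact pow_le_pow_left₀ (abs_nonneg _) (hres i x) 2
  -- a.e. boundedness of Rademacher signs
  have hS : ∀ᵐ ω' ∂(ℙ : Measure Ω'), ∀ j, |ε j ω'| ≤ 1 := by
    rw [MeasureTheory.ae_all_iff]
    intro j
    have hset : MeasurableSet {x : ℝ | 1 < |x|} :=
      measurableSet_lt measurable_const continuous_abs.measurable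
    have hz : (ℙ : Measure Ω') (ε j ⁻¹' {x : ℝ | 1 < |x|}) = 0 := by
      rw [← Measure.map_apply (hεmeas j) hset, hεdist j]
      simp only [Measure.coe_add, Pi.add_apply, Measure.smul_apply, smul_eq_mul,
        Measure.dirac_apply]
      have e1 : (1:ℝ) ∉ {x : ℝ | 1 < |x|} := by norm_num
      have e2 : (-1:ℝ) ∉ {x : ℝ | 1 < |x|} := by norm_num
      rw [Set.indicator_of_notMem e1, Set.indicator_of_notMem e2]
      simp
    rw [MeasureTheory.ae_iff]
    convert hz using 2
    ext ω'
    simp [not_le]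
  have hmapsnd : Measure.map Prod.snd ((ℙ : Measure Ω).prod (ℙ : Measure Ω'))
      = (ℙ : Measure Ω') := by
    rw [Measure.map_snd_prod]; simp
  have haeprod : ∀ᵐ p ∂((ℙ : Measure Ω).prod (ℙ : Measure Ω')), ∀ j, |ε j p.2| ≤ 1 := by
    rw [← hmapsnd] at hS
    exact MeasureTheory.ae_of_ae_map measurable_snd.aemeasurable hS
  -- measurability of the three integrands
  have m1 : Measurable (fun p : Ω × Ω' =>
      ⨆ i, (n : ℝ)⁻¹ * |∑ j, ε j p.2 * (F i (X j p.1) - f (X j p.1)) ^ 2|) := by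
    refine Measurable.iSup fun i => Measurable.const_mul (Measurable.abs ?_) _
    refine Finset.measurable_sum _ fun j _ => ?_
    exact ((hεmeas j).comp measurable_snd).mul
      ((((hFmeas i).comp ((hXmeas j).comp measurable_fst)).sub
        (hfmeas.comp ((hXmeas j).comp measurable_fst))).pow_const 2)
  have m2 : Measurable (fun p : Ω × Ω' =>
      ⨆ i, (n : ℝ)⁻¹ * |∑ j, ε j p.2 * F i (X j p.1)|) := by
    refine Measurable.iSup fun i => Measurable.const_mul (Measurable.abs ?_) _
    refine Finset.measurable_sum _ fun j _ => ?_
    exact ((hεmeas j).comp measurable_snd).mul ((hFmeas i).comp ((hXmeas j).comp measurable_fst))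
  have m3 : Measurable (fun p : Ω × Ω' =>
      (n : ℝ)⁻¹ * |∑ j, ε j p.2 * f (X j p.1)|) := by
    refine Measurable.const_mul (Measurable.abs ?_) _
    refine Finset.measurable_sum _ fun j _ => ?_
    exact ((hεmeas j).comp measurable_snd).mul (hfmeas.comp ((hXmeas j).comp measurable_fst))
  -- integrability
  have hint1 : Integrable (fun p : Ω × Ω' =>
      ⨆ i, (n : ℝ)⁻¹ * |∑ j, ε j p.2 * (F i (X j p.1) - f (X j p.1)) ^ 2|)
      ((ℙ : Measure Ω).prod ℙ) := by
    refine (integrable_const ((MF + Mf) ^ 2)).mono' m1.aestronglyMeasurable ?_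
    filter_upwards [haeprod] with p hp
    have hterm : ∀ i, (n : ℝ)⁻¹ * |∑ j, ε j p.2 * (F i (X j p.1) - f (X j p.1)) ^ 2|
        ≤ (MF + Mf) ^ 2 := by
      intro i
      have h1 : |∑ j, ε j p.2 * (F i (X j p.1) - f (X j p.1)) ^ 2| ≤ n * (MF + Mf) ^ 2 :=
        abs_sum_mul_le _ _ hp (fun j => hsq i (X j p.1))
      calc (n : ℝ)⁻¹ * |∑ j, ε j p.2 * (F i (X j p.1) - f (X j p.1)) ^ 2|
          ≤ (n : ℝ)⁻¹ * ((n:ℝ) * (MF + Mf) ^ 2) := mul_le_mul_of_nonneg_left h1 hninv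
        _ = (MF + Mf) ^ 2 := by field_simp
    have hbdd := bddAbove_of_le _ hterm
    have hup := ciSup_le hterm
    have hlo : (0:ℝ) ≤ ⨆ i, (n : ℝ)⁻¹ * |∑ j, ε j p.2 * (F i (X j p.1) - f (X j p.1)) ^ 2| :=
      le_trans (by positivity) (le_ciSup hbdd i₀)
    rw [Real.norm_eq_abs, abs_le]
    exact ⟨by nlinarith, hup⟩
  have hint2 : Integrable (fun p : Ω × Ω' =>
      ⨆ i, (n : ℝ)⁻¹ * |∑ j, ε j p.2 * F i (X j p.1)|) ((ℙ : Measure Ω).prod ℙ) := by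
    refine (integrable_const MF).mono' m2.aestronglyMeasurable ?_
    filter_upwards [haeprod] with p hp
    have hterm : ∀ i, (n : ℝ)⁻¹ * |∑ j, ε j p.2 * F i (X j p.1)| ≤ MF := by
      intro i
      have h1 : |∑ j, ε j p.2 * F i (X j p.1)| ≤ n * MF :=
        abs_sum_mul_le _ _ hp (fun j => hMF i (X j p.1))
      calc (n : ℝ)⁻¹ * |∑ j, ε j p.2 * F i (X j p.1)|
          ≤ (n : ℝ)⁻¹ * ((n:ℝ) * MF) := mul_le_mul_of_nonneg_left h1 hninv
        _ = MF := by field_simp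
    have hbdd := bddAbove_of_le _ hterm
    have hup := ciSup_le hterm
    have hlo : (0:ℝ) ≤ ⨆ i, (n : ℝ)⁻¹ * |∑ j, ε j p.2 * F i (X j p.1)| :=
      le_trans (by positivity) (le_ciSup hbdd i₀)
    rw [Real.norm_eq_abs, abs_le]
    exact ⟨by nlinarith, hup⟩
  have hint3 : Integrable (fun p : Ω × Ω' =>
      (n : ℝ)⁻¹ * |∑ j, ε j p.2 * f (X j p.1)|) ((ℙ : Measure Ω).prod ℙ) := by
    refine (integrable_const Mf).mono' m3.aestronglyMeasurable ?_
    filter_upwards [haeprod] with p hp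
    have h1 : |∑ j, ε j p.2 * f (X j p.1)| ≤ n * Mf :=
      abs_sum_mul_le _ _ hp (fun j => hMf (X j p.1))
    have h2 : (n : ℝ)⁻¹ * |∑ j, ε j p.2 * f (X j p.1)| ≤ (n : ℝ)⁻¹ * ((n:ℝ) * Mf) :=
      mul_le_mul_of_nonneg_left h1 hninv
    rw [Real.norm_eq_abs, abs_le]
    constructor
    · have : (0:ℝ) ≤ (n : ℝ)⁻¹ * |∑ j, ε j p.2 * f (X j p.1)| := by positivity
      nlinarith
    · calc (n : ℝ)⁻¹ * |∑ j, ε j p.2 * f (X j p.1)| ≤ (n : ℝ)⁻¹ * ((n:ℝ) * Mf) := h2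
        _ = Mf := by field_simp
  -- the per-sample finite-average functions
  set G1 : Ω → ℝ := fun ω => ((2:ℝ) ^ n)⁻¹ * ∑ b : Fin n → Bool,
    (⨆ i, (n : ℝ)⁻¹ * |∑ j, sg (b j) * (F i (X j ω) - f (X j ω)) ^ 2|) with hG1
  set G2 : Ω → ℝ := fun ω => ((2:ℝ) ^ n)⁻¹ * ∑ b : Fin n → Bool,
    (⨆ i, (n : ℝ)⁻¹ * |∑ j, sg (b j) * F i (X j ω)|) with hG2
  set G3 : Ω → ℝ := fun ω => ((2:ℝ) ^ n)⁻¹ * ∑ b : Fin n → Bool,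
    ((n : ℝ)⁻¹ * |∑ j, sg (b j) * f (X j ω)|) with hG3
  -- inner integral identities
  have e1 : (fun ω => ∫ ω', (⨆ i, (n : ℝ)⁻¹ *
      |∑ j, ε j ω' * (F i (X j ω) - f (X j ω)) ^ 2|) ∂(ℙ : Measure Ω')) = G1 := by
    funext ω
    exact integral_eps ε hεmeas hεindep hεdist
      (fun σ => ⨆ i, (n : ℝ)⁻¹ * |∑ j, σ j * (F i (X j ω) - f (X j ω)) ^ 2|)
      (Measurable.iSup fun i => Measurable.const_mul (Measurable.abs
        (Finset.measurable_sum _ fun j _ =>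
          (measurable_pi_apply j).mul measurable_const)) _)
  have e2 : (fun ω => ∫ ω', (⨆ i, (n : ℝ)⁻¹ *
      |∑ j, ε j ω' * F i (X j ω)|) ∂(ℙ : Measure Ω')) = G2 := by
    funext ω
    exact integral_eps ε hεmeas hεindep hεdist
      (fun σ => ⨆ i, (n : ℝ)⁻¹ * |∑ j, σ j * F i (X j ω)|)
      (Measurable.iSup fun i => Measurable.const_mul (Measurable.abs
        (Finset.measurable_sum _ fun j _ =>
          (measurable_pi_apply j).mul measurable_const)) _)
  have e3 : (fun ω => ∫ ω', ((n : ℝ)⁻¹ *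
      |∑ j, ε j ω' * f (X j ω)|) ∂(ℙ : Measure Ω')) = G3 := by
    funext ω
    exact integral_eps ε hεmeas hεindep hεdist
      (fun σ => (n : ℝ)⁻¹ * |∑ j, σ j * f (X j ω)|)
      (Measurable.const_mul (Measurable.abs
        (Finset.measurable_sum _ fun j _ =>
          (measurable_pi_apply j).mul measurable_const)) _)
  -- rewrite the three product integrals
  have E1 : (∫ p : Ω × Ω',
      (⨆ i, (n : ℝ)⁻¹ * |∑ j, ε j p.2 * (F i (X j p.1) - f (X j p.1)) ^ 2|)
        ∂((ℙ : Measure Ω).prod ℙ)) = ∫ ω, G1 ω ∂(ℙ : Measure Ω) := by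
    rw [MeasureTheory.integral_prod _ hint1, ← e1]
  have E2 : (∫ p : Ω × Ω',
      (⨆ i, (n : ℝ)⁻¹ * |∑ j, ε j p.2 * F i (X j p.1)|)
        ∂((ℙ : Measure Ω).prod ℙ)) = ∫ ω, G2 ω ∂(ℙ : Measure Ω) := by
    rw [MeasureTheory.integral_prod _ hint2, ← e2]
  have E3 : (∫ p : Ω × Ω',
      ((n : ℝ)⁻¹ * |∑ j, ε j p.2 * f (X j p.1)|)
        ∂((ℙ : Measure Ω).prod ℙ)) = ∫ ω, G3 ω ∂(ℙ : Measure Ω) := by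
    rw [MeasureTheory.integral_prod _ hint3, ← e3]
  -- integrability of G's
  have hG1int : Integrable G1 (ℙ : Measure Ω) := by rw [← e1]; exact hint1.integral_prod_left
  have hG2int : Integrable G2 (ℙ : Measure Ω) := by rw [← e2]; exact hint2.integral_prod_left
  have hG3int : Integrable G3 (ℙ : Measure Ω) := by rw [← e3]; exact hint3.integral_prod_left
  -- pointwise inequality
  have hpoint : ∀ ω, G1 ω ≤ 4 * (MF + Mf) * (G2 ω + G3 ω) := by
    intro ω
    have hbv : ∀ i j, |F i (X j ω) - f (X j ω)| ≤ MF + Mf := fun i j => hres i (X j ω)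
    have key : ∑ b : Fin n → Bool, (⨆ i, |∑ j, sg (b j) * (F i (X j ω) - f (X j ω)) ^ 2|)
        ≤ (4 * (MF + Mf)) * ∑ b : Fin n → Bool,
          (⨆ i, |∑ j, sg (b j) * (F i (X j ω) - f (X j ω))|) :=
      key_finite (fun i j => F i (X j ω) - f (X j ω)) (MF + Mf) hM0 hbv
    -- triangle inequality per sign vector
    have tri : ∀ b : Fin n → Bool,
        (⨆ i, |∑ j, sg (b j) * (F i (X j ω) - f (X j ω))|)
          ≤ (⨆ i, |∑ j, sg (b j) * F i (X j ω)|) + |∑ j, sg (b j) * f (X j ω)| := by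
      intro b
      have bddF : BddAbove (Set.range fun i => |∑ j, sg (b j) * F i (X j ω)|) :=
        bddAbove_of_le _ (c := (n:ℝ) * MF) fun i => abs_sum_le b _ fun j => hMF i (X j ω)
      refine ciSup_le fun i => ?_
      have e : (∑ j, sg (b j) * (F i (X j ω) - f (X j ω)))
          = (∑ j, sg (b j) * F i (X j ω)) - ∑ j, sg (b j) * f (X j ω) := by
        rw [← Finset.sum_sub_distrib]
        exact Finset.sum_congr rfl fun j _ => by ring
      rw [e]
      have habs : |(∑ j, sg (b j) * F i (X j ω)) - ∑ j, sg (b j) * f (X j ω)|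
          ≤ |∑ j, sg (b j) * F i (X j ω)| + |∑ j, sg (b j) * f (X j ω)| := by
        rw [sub_eq_add_neg]
        refine (abs_add_le _ _).trans ?_
        rw [abs_neg]
      exact habs.trans (add_le_add (le_ciSup bddF i) le_rfl)
    have tri' : ∑ b : Fin n → Bool, (⨆ i, |∑ j, sg (b j) * (F i (X j ω) - f (X j ω))|)
        ≤ (∑ b : Fin n → Bool, (⨆ i, |∑ j, sg (b j) * F i (X j ω)|))
          + ∑ b : Fin n → Bool, |∑ j, sg (b j) * f (X j ω)| := by
      rw [← Finset.sum_add_distrib]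
      exact Finset.sum_le_sum fun b _ => tri b
    -- pull out the n⁻¹ factors
    have pull1 : ∀ b : Fin n → Bool,
        (⨆ i, (n : ℝ)⁻¹ * |∑ j, sg (b j) * (F i (X j ω) - f (X j ω)) ^ 2|)
          = (n : ℝ)⁻¹ * ⨆ i, |∑ j, sg (b j) * (F i (X j ω) - f (X j ω)) ^ 2| :=
      fun b => (Real.mul_iSup_of_nonneg hninv _).symm
    have pull2 : ∀ b : Fin n → Bool,
        (⨆ i, (n : ℝ)⁻¹ * |∑ j, sg (b j) * F i (X j ω)|)
          = (n : ℝ)⁻¹ * ⨆ i, |∑ j, sg (b j) * F i (X j ω)| :=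
      fun b => (Real.mul_iSup_of_nonneg hninv _).symm
    have g1e : G1 ω = ((2:ℝ) ^ n)⁻¹ * ((n : ℝ)⁻¹ * ∑ b : Fin n → Bool,
        (⨆ i, |∑ j, sg (b j) * (F i (X j ω) - f (X j ω)) ^ 2|)) := by
      rw [hG1]
      simp only
      rw [Finset.sum_congr rfl fun b _ => pull1 b, ← Finset.mul_sum]
    have g2e : G2 ω = ((2:ℝ) ^ n)⁻¹ * ((n : ℝ)⁻¹ * ∑ b : Fin n → Bool,
        (⨆ i, |∑ j, sg (b j) * F i (X j ω)|)) := by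
      rw [hG2]
      simp only
      rw [Finset.sum_congr rfl fun b _ => pull2 b, ← Finset.mul_sum]
    have g3e : G3 ω = ((2:ℝ) ^ n)⁻¹ * ((n : ℝ)⁻¹ * ∑ b : Fin n → Bool,
        |∑ j, sg (b j) * f (X j ω)|) := by
      rw [hG3]
      simp only
      rw [← Finset.mul_sum]
    have hc0 : (0:ℝ) ≤ ((2:ℝ) ^ n)⁻¹ * (n : ℝ)⁻¹ := by positivity
    have chain : ∑ b : Fin n → Bool, (⨆ i, |∑ j, sg (b j) * (F i (X j ω) - f (X j ω)) ^ 2|)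
        ≤ (4 * (MF + Mf)) * ((∑ b : Fin n → Bool, (⨆ i, |∑ j, sg (b j) * F i (X j ω)|))
          + ∑ b : Fin n → Bool, |∑ j, sg (b j) * f (X j ω)|) :=
      key.trans (mul_le_mul_of_nonneg_left tri' (by linarith))
    rw [g1e, g2e, g3e]
    calc ((2:ℝ) ^ n)⁻¹ * ((n : ℝ)⁻¹ * ∑ b : Fin n → Bool,
          (⨆ i, |∑ j, sg (b j) * (F i (X j ω) - f (X j ω)) ^ 2|))
        ≤ ((2:ℝ) ^ n)⁻¹ * ((n : ℝ)⁻¹ * ((4 * (MF + Mf)) *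
            ((∑ b : Fin n → Bool, (⨆ i, |∑ j, sg (b j) * F i (X j ω)|))
              + ∑ b : Fin n → Bool, |∑ j, sg (b j) * f (X j ω)|))) := by
          rw [← mul_assoc, ← mul_assoc]
          exact mul_le_mul_of_nonneg_left chain hc0
      _ = 4 * (MF + Mf) * (((2:ℝ) ^ n)⁻¹ * ((n : ℝ)⁻¹ * ∑ b : Fin n → Bool,
            (⨆ i, |∑ j, sg (b j) * F i (X j ω)|))
          + ((2:ℝ) ^ n)⁻¹ * ((n : ℝ)⁻¹ * ∑ b : Fin n → Bool,
            |∑ j, sg (b j) * f (X j ω)|)) := by ring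
  -- conclude
  rw [E1, E2, E3]
  rw [← MeasureTheory.integral_add hG2int hG3int]
  rw [← MeasureTheory.integral_const_mul]
  exact MeasureTheory.integral_mono hG1int ((hG2int.add hG3int).const_mul _) hpoint
end
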